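/- arXiv:1008.0595 — 16 statements merged into one kernel-verified Lean document; each statement's English description precedes it below -/
import Mathlib

section
/- Let n ≥ 1 and k ≥ 3, and let S_1, …, S_k be k pairwise distinct n-element finite sets such that every two of them share an immediate subset (i.e., |S_i ∩ S_j| = n − 1 for all i ≠ j). Then either |S_1 ∩ ⋯ ∩ S_k| = n − 1 or |S_1 ∪ ⋯ ∪ S_k| = n + 1, but not both. -/
/-!
Fix two of the sets, `A` and `B`; then `T = A ∩ B` has `n - 1` elements and `U = A ∪ B` has
`n + 1`. A third set `C` meeting both in `n - 1` elements either contains `T`, or misses a point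
of `T` and is then forced into `U` by counting. A set containing `T` but not inside `U` and a set
inside `U` not containing `T` cannot meet in `n - 1` elements, so either every set contains `T`
(and the intersection is `T`) or every set lies in `U` (and the union is `U`). Both cannot
happen, since by inclusion–exclusion any three of the sets satisfy
`|A ∪ B ∪ C| = |A ∩ B ∩ C| + 3`.
-/

open Finset

section

variable {α : Type*} [DecidableEq α] {n : ℕ} {A B C : Finset α}

lemma card_union_of_card_inter (hn : 1 ≤ n) (hA : #A = n) (hB : #B = n)
    (hAB : #(A ∩ B) = n - 1) : #(A ∪ B) = n + 1 := by
  have := card_union_add_card_inter A B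
  omega

lemma card_union_union_eq_card_inter_inter_add_three (hn : 1 ≤ n) (hA : #A = n)
    (hB : #B = n) (hC : #C = n) (hAB : #(A ∩ B) = n - 1) (hAC : #(A ∩ C) = n - 1)
    (hBC : #(B ∩ C) = n - 1) : #(A ∪ B ∪ C) = #(A ∩ B ∩ C) + 3 := by
  have hunion := card_union_add_card_inter (A ∪ B) C
  have hinter := card_union_add_card_inter (A ∩ C) (B ∩ C)
  rw [union_inter_distrib_right] at hunion
  rw [← inter_inter_distrib_right] at hinter
  have := card_union_of_card_inter hn hA hB hAB
  omega

lemma subset_union_of_not_inter_subset (hC : #C = n) (hCA : #(C ∩ A) = n - 1)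
    (hCB : #(C ∩ B) = n - 1) (hAB : #(A ∩ B) = n - 1) (hnot : ¬A ∩ B ⊆ C) :
    C ⊆ A ∪ B := by
  have hlt : #(C ∩ (A ∩ B)) < #(A ∩ B) :=
    card_lt_card ⟨inter_subset_right, fun h => hnot (h.trans inter_subset_left)⟩
  have hsplit := card_union_add_card_inter (C ∩ A) (C ∩ B)
  rw [← inter_union_distrib_left, ← inter_inter_distrib_left] at hsplit
  have hfull : C ∩ (A ∪ B) = C :=
    eq_of_subset_of_card_le inter_subset_left (by omega)
  exact inter_eq_left.mp hfull

lemma subset_or_subset_of_card_inter {D U T : Finset α} (hC : #C = n)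
    (hCD : #(C ∩ D) = n - 1) (hDU : D ⊆ U) (hT : T ⊆ C ∩ U) : C ⊆ U ∨ T ⊆ D := by
  by_contra! ⟨hCU, hTD⟩
  have hlt : #(C ∩ U) < #C :=
    card_lt_card ⟨inter_subset_left, fun h => hCU (h.trans inter_subset_right)⟩
  have hsub : C ∩ D ⊆ C ∩ U := inter_subset_inter_left hDU
  have heq : C ∩ D = C ∩ U := eq_of_subset_of_card_le hsub (by omega)
  exact hTD (hT.trans (heq ▸ inter_subset_right))

end

lemma forall_inter_subset_or_forall_subset_union {ι α : Type*} [DecidableEq α] {n : ℕ}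
    (S : ι → Finset α) (hcard : ∀ i, #(S i) = n)
    (hpair : ∀ i j, i ≠ j → #(S i ∩ S j) = n - 1) {i₀ i₁ : ι} (h : i₀ ≠ i₁) :
    (∀ j, S i₀ ∩ S i₁ ⊆ S j) ∨ ∀ j, S j ⊆ S i₀ ∪ S i₁ := by
  have hT : ∀ j, S i₀ ∩ S i₁ ⊆ S j ∨ S j ⊆ S i₀ ∪ S i₁ := by
    intro j
    by_cases hj₀ : j = i₀
    · exact Or.inl (hj₀ ▸ inter_subset_left)
    by_cases hj₁ : j = i₁
    · exact Or.inl (hj₁ ▸ inter_subset_right)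
    exact or_iff_not_imp_left.mpr <| subset_union_of_not_inter_subset (hcard j)
      (hpair j i₀ hj₀) (hpair j i₁ hj₁) (hpair i₀ i₁ h)
  by_contra! ⟨⟨l, hl⟩, ⟨j, hj⟩⟩
  have hjT := (hT j).resolve_right hj
  have hlU := (hT l).resolve_left hl
  have hjl : j ≠ l := fun hjl => hj (hjl ▸ hlU)
  rcases subset_or_subset_of_card_inter (hcard j) (hpair j l hjl) hlU
    (subset_inter hjT inter_subset_union) with hjU | hTl
  exacts [hj hjU, hl hTl]

/-- Let `n ≥ 1`, `k ≥ 3`, and `S 1, …, S k` be pairwise distinct `n`-element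
finite sets such that every two of them share an immediate subset
(`|S i ∩ S j| = n - 1` for `i ≠ j`).  Then either the intersection of all of them has
`n - 1` elements, or the union of all of them has `n + 1` elements, but not both. -/
theorem immediate_subset_or_superset (n k : ℕ) (hn : 1 ≤ n) (hk : 3 ≤ k)
    (S : Fin k → Finset ℕ)
    (hcard : ∀ i, (S i).card = n)
    (hpair : ∀ i j, i ≠ j → (S i ∩ S j).card = n - 1) :
    Xor'
      ((Finset.univ.inf' ⟨⟨0, by omega⟩, Finset.mem_univ _⟩ S).card = n - 1)
      ((Finset.univ.sup S).card = n + 1) := by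
  obtain ⟨i₀, i₁, i₂, h₀₁, h₀₂, h₁₂⟩ : ∃ i₀ i₁ i₂ : Fin k, i₀ ≠ i₁ ∧ i₀ ≠ i₂ ∧ i₁ ≠ i₂ :=
    ⟨⟨0, by omega⟩, ⟨1, by omega⟩, ⟨2, by omega⟩, by simp [Fin.ext_iff]⟩
  have hI : univ.inf' ⟨i₀, mem_univ _⟩ S ⊆ S i₀ ∩ S i₁ ∩ S i₂ :=
    le_inf (le_inf (inf'_le S (mem_univ _)) (inf'_le S (mem_univ _))) (inf'_le S (mem_univ _))
  have hJ : S i₀ ∪ S i₁ ∪ S i₂ ⊆ univ.sup S :=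
    sup_le (sup_le (le_sup (mem_univ _)) (le_sup (mem_univ _))) (le_sup (mem_univ _))
  have hI₃ := card_le_card hI
  have hJ₃ := card_le_card hJ
  have h₃ := card_union_union_eq_card_inter_inter_add_three hn (hcard i₀) (hcard i₁) (hcard i₂)
    (hpair _ _ h₀₁) (hpair _ _ h₀₂) (hpair _ _ h₁₂)
  refine (xor_iff_or_and_not_and _ _).mpr ⟨?_, fun ⟨hIn, hJn⟩ => by omega⟩
  rcases forall_inter_subset_or_forall_subset_union S hcard hpair h₀₁ with hstar | hcube
  · have hTI : #(S i₀ ∩ S i₁) ≤ #(univ.inf' ⟨i₀, mem_univ _⟩ S) :=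
      card_le_card (le_inf' _ S fun j _ => hstar j)
    have hT₃ := card_le_card (inter_subset_left : S i₀ ∩ S i₁ ∩ S i₂ ⊆ S i₀ ∩ S i₁)
    have hT := hpair _ _ h₀₁
    left; omega
  · have hJU := card_le_card (Finset.sup_le fun j _ => hcube j : univ.sup S ⊆ S i₀ ∪ S i₁)
    have hU₃ := card_le_card (subset_union_left : S i₀ ∪ S i₁ ⊆ S i₀ ∪ S i₁ ∪ S i₂)
    have hU := card_union_of_card_inter hn (hcard i₀) (hcard i₁) (hpair _ _ h₀₁)
    right; omega
end

section
/- Suppose G is a JIS graph and L and L' are two distinct maxcliques in G. Then L and L' share at most two vertices, i.e., |V(L) ∩ V(L')| ≤ 2. -/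
/-- A finite simple graph `G` is JIS (isomorphic to an induced subgraph of a Johnson graph)
if for some positive integer `n` there is an injective assignment `v ↦ S v` of `n`-element
finite subsets of `ℕ` to the vertices of `G` such that two distinct vertices `v` and `w`
are adjacent if and only if `|S v ∩ S w| = n - 1`. -/
def IsJIS {V : Type*} [Fintype V] (G : SimpleGraph V) : Prop :=
  ∃ n : ℕ, 0 < n ∧ ∃ S : V → Finset ℕ, Function.Injective S ∧
    (∀ v, (S v).card = n) ∧
    ∀ v w : V, v ≠ w → (G.Adj v w ↔ (S v ∩ S w).card = n - 1)

/-- A maxclique of `G` is a set of vertices that is a clique and is maximal under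
inclusion among cliques of `G`. -/
def IsMaxClique {V : Type*} (G : SimpleGraph V) (L : Set V) : Prop :=
  G.IsClique L ∧ ∀ L' : Set V, G.IsClique L' → L ⊆ L' → L' = L

/-!
A JIS graph is an induced subgraph of a Johnson graph. Three pairwise adjacent `n`-sets either
all contain a common `(n - 1)`-set `I` or all lie in a common `(n + 1)`-set `U`, since their
union has exactly three more elements than their intersection. Every `n`-set adjacent to all
three then also contains `I`, resp. lies in `U`, and the `n`-sets containing `I`, resp. contained
in `U`, are pairwise adjacent. So a triangle together with its common neighbours spans a clique,
and every maxclique through the triangle is equal to it.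
-/

open Finset

namespace SimpleGraph

variable {V W : Type*}

def TriangleCliqueClosed (G : SimpleGraph V) : Prop :=
  ∀ ⦃u v w⦄, G.Adj u v → G.Adj u w → G.Adj v w →
    ∃ C : Set V, G.IsClique C ∧ u ∈ C ∧ v ∈ C ∧ w ∈ C ∧
      ∀ x, G.Adj x u → G.Adj x v → G.Adj x w → x ∈ C

theorem TriangleCliqueClosed.comap {G : SimpleGraph V} {H : SimpleGraph W} (f : G ↪g H)
    (hH : H.TriangleCliqueClosed) : G.TriangleCliqueClosed := by
  intro u v w huv huw hvw
  obtain ⟨C, hC, hu, hv, hw, hcommon⟩ :=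
    hH (f.map_adj_iff.2 huv) (f.map_adj_iff.2 huw) (f.map_adj_iff.2 hvw)
  refine ⟨f ⁻¹' C, fun x hx y hy hxy ↦ f.map_adj_iff.1 (hC hx hy (f.injective.ne hxy)),
    hu, hv, hw, fun x hxu hxv hxw ↦ ?_⟩
  exact hcommon (f x) (f.map_adj_iff.2 hxu) (f.map_adj_iff.2 hxv) (f.map_adj_iff.2 hxw)

theorem TriangleCliqueClosed.eq_of_two_lt_ncard_inter {G : SimpleGraph V}
    (hG : G.TriangleCliqueClosed) {L L' : Set V} (hL : IsMaxClique G L)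
    (hL' : IsMaxClique G L') (h : 2 < (L ∩ L').ncard) : L = L' := by
  obtain ⟨u, ⟨huL, huL'⟩, v, ⟨hvL, hvL'⟩, w, ⟨hwL, hwL'⟩, huv, huw, hvw⟩ :=
    (Set.two_lt_ncard (Set.finite_of_ncard_pos (by omega))).1 h
  obtain ⟨C, hC, hu, hv, hw, hcommon⟩ :=
    hG (hL.1 huL hvL huv) (hL.1 huL hwL huw) (hL.1 hvL hwL hvw)
  have hsub {M : Set V} (hM : G.IsClique M) (huM : u ∈ M) (hvM : v ∈ M) (hwM : w ∈ M) :
      M ⊆ C := by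
    intro x hx
    obtain rfl | hxu := eq_or_ne x u; · exact hu
    obtain rfl | hxv := eq_or_ne x v; · exact hv
    obtain rfl | hxw := eq_or_ne x w; · exact hw
    exact hcommon x (hM hx huM hxu) (hM hx hvM hxv) (hM hx hwM hxw)
  exact (hL.2 C hC (hsub hL.1 huL hvL hwL)).symm.trans (hL'.2 C hC (hsub hL'.1 huL' hvL' hwL'))

/-- The disjoint union over `k` of the Johnson graphs `J(α, k)`. -/
def johnson (α : Type*) [DecidableEq α] : SimpleGraph (Finset α) where
  Adj s t := #s = #t ∧ #(s ∩ t) + 1 = #s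
  symm := ⟨fun s t h ↦ ⟨h.1.symm, by rw [inter_comm]; omega⟩⟩
  loopless := ⟨fun s h ↦ by simp at h⟩

variable {α : Type*} [DecidableEq α] {k : ℕ} {s t u z : Finset α}

@[simp]
theorem johnson_adj : (johnson α).Adj s t ↔ #s = #t ∧ #(s ∩ t) + 1 = #s := Iff.rfl

theorem johnson_adj_of_le_card_inter (hst : #s = #t) (hne : s ≠ t)
    (h : #s ≤ #(s ∩ t) + 1) : (johnson α).Adj s t := by
  have hlt : #(s ∩ t) < #s := by
    refine card_lt_card ⟨inter_subset_left, fun hs ↦ hne ?_⟩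
    exact eq_of_subset_of_card_le (fun x hx ↦ (mem_inter.1 (hs hx)).2) hst.ge
  exact ⟨hst, by omega⟩

theorem isClique_johnson_supersets {I : Finset α} (hI : #I + 1 = k) :
    (johnson α).IsClique {z | #z = k ∧ I ⊆ z} := by
  rintro z ⟨hz, hIz⟩ z' ⟨hz', hIz'⟩ hne
  have := card_le_card (subset_inter hIz hIz')
  exact johnson_adj_of_le_card_inter (hz.trans hz'.symm) hne (by omega)

theorem isClique_johnson_subsets {U : Finset α} (hU : #U = k + 1) :
    (johnson α).IsClique {z | #z = k ∧ z ⊆ U} := by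
  rintro z ⟨hz, hzU⟩ z' ⟨hz', hz'U⟩ hne
  have := card_le_card (union_subset hzU hz'U)
  have := card_union_add_card_inter z z'
  exact johnson_adj_of_le_card_inter (hz.trans hz'.symm) hne (by omega)

theorem subset_insert_of_johnson_adj (h : (johnson α).Adj s t) {x : α} (hxs : x ∈ s)
    (hxt : x ∉ t) : s ⊆ insert x t := by
  have hsdiff : #(s \ t) = 1 := by
    have := card_sdiff_add_card_inter s t
    rw [johnson_adj] at h
    omega
  intro y hy
  by_cases hyt : y ∈ t
  · exact mem_insert_of_mem hyt
  · rw [card_le_one.1 hsdiff.le y (mem_sdiff.2 ⟨hy, hyt⟩) x (mem_sdiff.2 ⟨hxs, hxt⟩)]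
    exact mem_insert_self x t

theorem card_union_union_of_johnson_triangle (hst : (johnson α).Adj s t)
    (hsu : (johnson α).Adj s u) (htu : (johnson α).Adj t u) :
    #(s ∪ t ∪ u) = #(s ∩ t ∩ u) + 3 := by
  have h₁ := card_union_add_card_inter (s ∪ t) u
  have h₂ := card_union_add_card_inter s t
  have h₃ := card_union_add_card_inter (s ∩ u) (t ∩ u)
  rw [union_inter_distrib_right] at h₁
  rw [← inter_inter_distrib_right] at h₃
  rw [johnson_adj] at hst hsu htu
  omega

theorem inter_subset_of_johnson_adj (hs : (johnson α).Adj s z) (ht : (johnson α).Adj t z)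
    (hu : (johnson α).Adj u z) (h : #z + 1 < #(s ∪ t ∪ u)) : s ∩ t ∩ u ⊆ z := by
  intro x hx
  by_contra hxz
  simp only [mem_inter] at hx
  have hU : s ∪ t ∪ u ⊆ insert x z := union_subset (union_subset
    (subset_insert_of_johnson_adj hs hx.1.1 hxz) (subset_insert_of_johnson_adj ht hx.1.2 hxz))
    (subset_insert_of_johnson_adj hu hx.2 hxz)
  have := (card_le_card hU).trans (card_insert_le x z)
  omega

theorem subset_union_of_johnson_adj (hs : (johnson α).Adj z s) (ht : (johnson α).Adj z t)
    (hu : (johnson α).Adj z u) (h : #(s ∩ t ∩ u) + 1 < #z) : z ⊆ s ∪ t ∪ u := by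
  intro x hx
  by_contra hxU
  simp only [mem_union, not_or] at hxU
  have hI : z ⊆ insert x (s ∩ t ∩ u) := by
    rw [insert_inter_distrib, insert_inter_distrib]
    exact subset_inter (subset_inter (subset_insert_of_johnson_adj hs hx hxU.1.1)
      (subset_insert_of_johnson_adj ht hx hxU.1.2)) (subset_insert_of_johnson_adj hu hx hxU.2)
  have := (card_le_card hI).trans (card_insert_le x _)
  omega

theorem triangleCliqueClosed_johnson : (johnson α).TriangleCliqueClosed := by
  intro s t u hst hsu htu
  obtain ⟨hcard_t, hcard_st⟩ := johnson_adj.1 hst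
  have hcard_u : #s = #u := (johnson_adj.1 hsu).1
  have hI : #(s ∩ t ∩ u) + 1 ≤ #s := by
    have := card_le_card (inter_subset_left : s ∩ t ∩ u ⊆ s ∩ t)
    omega
  have hU : #s + 1 ≤ #(s ∪ t ∪ u) := by
    have := card_union_add_card_inter s t
    have := card_le_card (subset_union_left : s ∪ t ⊆ s ∪ t ∪ u)
    omega
  have := card_union_union_of_johnson_triangle hst hsu htu
  obtain hsun | hmoon : #(s ∩ t ∩ u) + 1 = #s ∨ #(s ∪ t ∪ u) = #s + 1 := by omega
  · refine ⟨{z | #z = #s ∧ s ∩ t ∩ u ⊆ z}, isClique_johnson_supersets hsun,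
      ⟨rfl, inter_subset_left.trans inter_subset_left⟩,
      ⟨hcard_t.symm, inter_subset_left.trans inter_subset_right⟩,
      ⟨hcard_u.symm, inter_subset_right⟩, fun z hzs hzt hzu ↦ ?_⟩
    have hz := (johnson_adj.1 hzs).1
    exact ⟨hz, inter_subset_of_johnson_adj hzs.symm hzt.symm hzu.symm (by omega)⟩
  · refine ⟨{z | #z = #s ∧ z ⊆ s ∪ t ∪ u}, isClique_johnson_subsets hmoon,
      ⟨rfl, subset_union_left.trans subset_union_left⟩,
      ⟨hcard_t.symm, subset_union_right.trans subset_union_left⟩,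
      ⟨hcard_u.symm, subset_union_right⟩, fun z hzs hzt hzu ↦ ?_⟩
    have hz := (johnson_adj.1 hzs).1
    exact ⟨hz, subset_union_of_johnson_adj hzs hzt hzu (by omega)⟩

end SimpleGraph

open SimpleGraph

theorem IsJIS.nonempty_embedding_johnson {V : Type*} [Fintype V] {G : SimpleGraph V}
    (hG : IsJIS G) : Nonempty (G ↪g johnson ℕ) := by
  obtain ⟨n, hn, S, hinj, hcard, hadj⟩ := hG
  refine ⟨⟨⟨S, hinj⟩, fun {v w} ↦ ?_⟩⟩
  obtain rfl | hvw := eq_or_ne v w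
  · simp
  · simp only [Function.Embedding.coeFn_mk, johnson_adj, hadj v w hvw, hcard, true_and]
    omega

/-- two distinct maxcliques of a JIS graph share at most two vertices. -/
theorem maxcliques_share_at_most_two {V : Type*} [Fintype V] (G : SimpleGraph V)
    (hG : IsJIS G) (L L' : Set V) (hL : IsMaxClique G L) (hL' : IsMaxClique G L')
    (hne : L ≠ L') :
    (L ∩ L').ncard ≤ 2 := by
  obtain ⟨f⟩ := hG.nonempty_embedding_johnson
  by_contra! h
  exact hne ((triangleCliqueClosed_johnson.comap f).eq_of_two_lt_ncard_inter hL hL' h)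
end

section
/- Suppose G is a JIS graph and L and L' are two distinct maxcliques in G that share exactly two vertices. Then no vertex in V(L) \ V(L') is adjacent to any vertex in V(L') \ V(L). -/
open Finset

namespace Finset

variable {α : Type*} [DecidableEq α] {n : ℕ} {A B C D : Finset α}

theorem subset_iff_card_inter_eq_left {s t : Finset α} : s ⊆ t ↔ #(s ∩ t) = #s := by
  rw [← sdiff_eq_empty_iff_subset, ← card_eq_zero]
  have := card_sdiff_add_card_inter s t
  omega

theorem card_inter_eq_sub_one_of_ne (hC : #C = n) (hD : #D = n) (hCD : C ≠ D)
    (h : n - 1 ≤ #(C ∩ D)) : #(C ∩ D) = n - 1 := by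
  have hlt : #(C ∩ D) < n := by
    by_contra! hle
    have hsub : C ⊆ D :=
      subset_iff_card_inter_eq_left.mpr (le_antisymm (card_le_card inter_subset_left) (by omega))
    exact hCD (eq_of_subset_of_card_le hsub (by omega))
  omega

theorem card_inter_union_add_card_inter_inter (A B C : Finset α) :
    #(C ∩ (A ∪ B)) + #(C ∩ (A ∩ B)) = #(C ∩ A) + #(C ∩ B) := by
  rw [inter_union_distrib_left, inter_inter_distrib_left, card_union_add_card_inter]

theorem subset_union_iff_not_inter_subset (hn : 0 < n) (hAB : #(A ∩ B) = n - 1) (hC : #C = n)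
    (hCA : #(C ∩ A) = n - 1) (hCB : #(C ∩ B) = n - 1) : C ⊆ A ∪ B ↔ ¬ A ∩ B ⊆ C := by
  have hsum := card_inter_union_add_card_inter_inter A B C
  have hU : #(C ∩ (A ∪ B)) ≤ #C := card_le_card inter_subset_left
  have hT : #(C ∩ (A ∩ B)) ≤ #(A ∩ B) := card_le_card inter_subset_right
  rw [subset_iff_card_inter_eq_left, subset_iff_card_inter_eq_left, inter_comm (A ∩ B)]
  omega

theorem card_inter_lt_of_inter_subset_of_subset_union (hAB : #(A ∩ B) = n - 1)
    (hCA : #(C ∩ A) = n - 1) (hCB : #(C ∩ B) = n - 1) (hTC : A ∩ B ⊆ C) (hDU : D ⊆ A ∪ B)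
    (hTD : ¬ A ∩ B ⊆ D) : #(C ∩ D) < n - 1 := by
  have hCU : C ∩ (A ∪ B) = A ∩ B := by
    have hsum := card_inter_union_add_card_inter_inter A B C
    rw [inter_eq_right.mpr hTC] at hsum
    exact (eq_of_subset_of_card_le (subset_inter hTC inter_subset_union) (by omega)).symm
  have hCD : C ∩ D ⊆ A ∩ B ∩ D :=
    subset_inter (hCU ▸ inter_subset_inter_left hDU) inter_subset_right
  have hTD' : #(A ∩ B ∩ D) ≠ #(A ∩ B) := mt subset_iff_card_inter_eq_left.mpr hTD
  calc #(C ∩ D) ≤ #(A ∩ B ∩ D) := card_le_card hCD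
    _ < #(A ∩ B) := lt_of_le_of_ne (card_le_card inter_subset_left) hTD'
    _ = n - 1 := hAB

theorem card_inter_eq_sub_one_iff (hn : 0 < n) (hA : #A = n) (hB : #B = n)
    (hAB : #(A ∩ B) = n - 1) (hC : #C = n) (hCA : #(C ∩ A) = n - 1) (hCB : #(C ∩ B) = n - 1)
    (hD : #D = n) (hDA : #(D ∩ A) = n - 1) (hDB : #(D ∩ B) = n - 1) (hCD : C ≠ D) :
    #(C ∩ D) = n - 1 ↔ (A ∩ B ⊆ C ↔ A ∩ B ⊆ D) := by
  have hdichC := subset_union_iff_not_inter_subset hn hAB hC hCA hCB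
  have hdichD := subset_union_iff_not_inter_subset hn hAB hD hDA hDB
  by_cases hTC : A ∩ B ⊆ C <;> by_cases hTD : A ∩ B ⊆ D
  · simp only [hTC, hTD, iff_true]
    exact card_inter_eq_sub_one_of_ne hC hD hCD (hAB ▸ card_le_card (subset_inter hTC hTD))
  · have := card_inter_lt_of_inter_subset_of_subset_union hAB hCA hCB hTC (hdichD.mpr hTD) hTD
    exact iff_of_false (by omega) (by tauto)
  · have := card_inter_lt_of_inter_subset_of_subset_union hAB hDA hDB hTD (hdichC.mpr hTC) hTC
    exact iff_of_false (by rw [inter_comm]; omega) (by tauto)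
  · simp only [hTC, hTD, iff_true]
    have hAB_union := card_union_add_card_inter A B
    have hCD_union := card_union_add_card_inter C D
    have hCD_le := card_le_card (union_subset (hdichC.mpr hTC) (hdichD.mpr hTD))
    exact card_inter_eq_sub_one_of_ne hC hD hCD (by omega)

end Finset

namespace SimpleGraph

variable {V α : Type*} [DecidableEq α] {G : SimpleGraph V} {n : ℕ} {S : V → Finset α}

theorem adj_iff_inter_subset_iff (hn : 0 < n) (hS : Function.Injective S)
    (hcard : ∀ v, #(S v) = n) (hadj : ∀ v w, v ≠ w → (G.Adj v w ↔ #(S v ∩ S w) = n - 1))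
    {a b : V} (hab : G.Adj a b) {z w : V} (hza : G.Adj z a) (hzb : G.Adj z b) (hwa : G.Adj w a)
    (hwb : G.Adj w b) (hzw : z ≠ w) :
    G.Adj z w ↔ (S a ∩ S b ⊆ S z ↔ S a ∩ S b ⊆ S w) := by
  rw [hadj z w hzw]
  exact card_inter_eq_sub_one_iff hn (hcard a) (hcard b) ((hadj a b hab.ne).mp hab) (hcard z)
    ((hadj z a hza.ne).mp hza) ((hadj z b hzb.ne).mp hzb) (hcard w) ((hadj w a hwa.ne).mp hwa)
    ((hadj w b hwb.ne).mp hwb) (hS.ne hzw)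

end SimpleGraph

theorem maxcliques_share_two_no_adj_general {V : Type*} [Fintype V] (G : SimpleGraph V)
    (hG : IsJIS G) (L L' : Set V) (hL : IsMaxClique G L) (hL' : IsMaxClique G L')
    (hshare : (L ∩ L').ncard = 2) :
    ∀ x ∈ L \ L', ∀ y ∈ L' \ L, ¬ G.Adj x y := by
  obtain ⟨n, hn, S, hS, hcard, hadj⟩ := hG
  obtain ⟨a, b, hab, hLL'⟩ := Set.ncard_eq_two.mp hshare
  have ha : a ∈ L ∩ L' := hLL' ▸ Set.mem_insert a {b}
  have hb : b ∈ L ∩ L' := hLL' ▸ Set.mem_insert_of_mem a rfl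
  have hkind := @SimpleGraph.adj_iff_inter_subset_iff _ _ _ G n S hn hS hcard hadj a b
    (hL.1 ha.1 hb.1 hab)
  have hcommon : ∀ z ∈ L' \ L, G.Adj z a ∧ G.Adj z b := fun z hz ↦
    ⟨hL'.1 hz.1 ha.2 fun h ↦ hz.2 (h ▸ ha.1), hL'.1 hz.1 hb.2 fun h ↦ hz.2 (h ▸ hb.1)⟩
  intro x hx y hy hxy
  have hxa : G.Adj x a := hL.1 hx.1 ha.1 fun h ↦ hx.2 (h ▸ ha.2)
  have hxb : G.Adj x b := hL.1 hx.1 hb.1 fun h ↦ hx.2 (h ▸ hb.2)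
  have hxL' : ∀ z ∈ L', G.Adj x z := by
    intro z hz
    by_cases hzL : z ∈ L
    · exact hL.1 hx.1 hzL fun h ↦ hx.2 (h ▸ hz)
    obtain ⟨hza, hzb⟩ := hcommon z ⟨hz, hzL⟩
    obtain ⟨hya, hyb⟩ := hcommon y hy
    rw [hkind hxa hxb hza hzb fun h ↦ hx.2 (h ▸ hz)]
    rw [hkind hxa hxb hya hyb fun h ↦ hx.2 (h ▸ hy.1)] at hxy
    rw [hxy]
    obtain rfl | hyz := eq_or_ne y z
    · rfl
    · exact (hkind hya hyb hza hzb hyz).mp (hL'.1 hy.1 hz hyz)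
  have hmax : insert x L' = L' := hL'.2 _ (hL'.1.insert fun z hz _ ↦ hxL' z hz)
    (Set.subset_insert x L')
  exact hx.2 (hmax ▸ Set.mem_insert x L')

/-- if two distinct maxcliques of a JIS graph share exactly two vertices,
then no vertex of `L \ L'` is adjacent to a vertex of `L' \ L`. -/
theorem maxcliques_share_two_no_adj {V : Type*} [Fintype V] (G : SimpleGraph V)
    (hG : IsJIS G) (L L' : Set V) (hL : IsMaxClique G L) (hL' : IsMaxClique G L')
    (hne : L ≠ L') (hshare : (L ∩ L').ncard = 2) :
    ∀ x ∈ L \ L', ∀ y ∈ L' \ L, ¬ G.Adj x y :=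
  maxcliques_share_two_no_adj_general G hG L L' hL hL' hshare
end

section
/- Suppose G is a JIS graph and L and L' are two distinct maxcliques in G that share exactly one vertex. Then every vertex in V(L) \ V(L') is adjacent to at most one vertex in V(L') \ V(L), and every vertex in V(L') \ V(L) is adjacent to at most one vertex in V(L) \ V(L'). -/
/-! In the Johnson graph of `(n+1)`-sets, every common neighbour `w` of an edge `y₁ y₂` either
contains `y₁ ∩ y₂` or lies in `y₁ ∪ y₂`, and only `y₁`, `y₂` do both. Hence a clique through the
edge consists of sets of a single kind, while all sets of one kind form a clique. Two cliques sharing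
a triangle `u, y₁, y₂` both have the kind of `u`, so their union is again a clique. If `x ∈ L \ L'`
were adjacent to `y₁ ≠ y₂` in `L' \ L`, then with the shared vertex `u ∈ L ∩ L'` this gives a clique
`L' ∪ {x, u, y₁, y₂}` strictly larger than `L'`. -/

open Finset

namespace Finset

variable {α : Type*} [DecidableEq α] {n : ℕ} {s t w A T : Finset α} {a : α}

theorem card_inter_le_of_ne (hs : #s = n + 1) (ht : #t = n + 1) (hst : s ≠ t) :
    #(s ∩ t) ≤ n := by
  by_contra! h
  have hsub : s ⊆ t := inter_eq_left.1 (eq_of_subset_of_card_le inter_subset_left (by omega))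
  exact hst (eq_of_subset_of_card_le hsub (by omega))

theorem card_union_eq_of_card_inter (hs : #s = n + 1) (ht : #t = n + 1) (hst : #(s ∩ t) = n) :
    #(s ∪ t) = n + 2 := by
  have := card_union_add_card_inter s t
  omega

theorem erase_subset_of_card_inter (hs : #s = n + 1) (hws : #(w ∩ s) = n) (ha : a ∈ s)
    (haw : a ∉ w) : s.erase a ⊆ w := by
  have hsub : w ∩ s ⊆ s.erase a := fun b hb =>
    mem_erase.2 ⟨fun hba => haw (hba ▸ (mem_inter.1 hb).1), (mem_inter.1 hb).2⟩
  have heq := eq_of_subset_of_card_le hsub (by rw [card_erase_of_mem ha, hs, hws]; rfl)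
  exact heq ▸ inter_subset_left

theorem inter_subset_or_subset_union (hs : #s = n + 1) (ht : #t = n + 1) (hw : #w = n + 1)
    (hst : #(s ∩ t) = n) (hws : #(w ∩ s) = n) (hwt : #(w ∩ t) = n) :
    s ∩ t ⊆ w ∨ w ⊆ s ∪ t := by
  refine or_iff_not_imp_left.2 fun hA => ?_
  obtain ⟨a, ha, haw⟩ := not_subset.1 hA
  rw [mem_inter] at ha
  have hsub : (s ∪ t).erase a ⊆ w := by
    rw [erase_union_distrib]
    exact union_subset (erase_subset_of_card_inter hs hws ha.1 haw)
      (erase_subset_of_card_inter ht hwt ha.2 haw)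
  have heq := eq_of_subset_of_card_le hsub <| by
    rw [card_erase_of_mem (mem_union_left t ha.1), card_union_eq_of_card_inter hs ht hst, hw]; rfl
  exact heq ▸ erase_subset a (s ∪ t)

theorem subset_or_subset_of_card_inter (hw : #w = n + 1) (htw : #(t ∩ w) = n) (hAw : A ⊆ w)
    (htT : t ⊆ T) (hAT : A ⊆ T) : A ⊆ t ∨ w ⊆ T := by
  refine or_iff_not_imp_left.2 fun hAt => ?_
  obtain ⟨a, ha, hat⟩ := not_subset.1 hAt
  rw [← insert_erase (hAw ha)]
  exact insert_subset (hAT ha) ((erase_subset_of_card_inter hw htw (hAw ha) hat).trans htT)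

theorem eq_or_eq_of_inter_subset_of_subset_union (hs : #s = n + 1) (ht : #t = n + 1)
    (hw : #w = n + 1) (hst : #(s ∩ t) = n) (hA : s ∩ t ⊆ w) (hT : w ⊆ s ∪ t) :
    w = s ∨ w = t := by
  by_cases hws : w ⊆ s
  · exact Or.inl (eq_of_subset_of_card_le hws (by rw [hs, hw]))
  obtain ⟨c, hcw, hcs⟩ := not_subset.1 hws
  have hct : c ∈ t := (mem_union.1 (hT hcw)).resolve_left hcs
  have hcard : #(insert c (s ∩ t)) = n + 1 := by
    rw [card_insert_of_notMem fun h => hcs (mem_inter.1 h).1, hst]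
  have hw' := eq_of_subset_of_card_le (insert_subset hcw hA) (by rw [hcard, hw])
  have ht' := eq_of_subset_of_card_le (insert_subset hct inter_subset_right) (by rw [hcard, ht])
  exact Or.inr (hw'.symm.trans ht')

end Finset

/-- `S` embeds `G` as an induced subgraph of the Johnson graph of `(n + 1)`-subsets of `α`; the
shift by one avoids the truncated `n - 1` of `IsJIS`. -/
structure IsJohnsonRep {V α : Type*} [DecidableEq α] (G : SimpleGraph V) (n : ℕ)
    (S : V → Finset α) : Prop where
  injective : Function.Injective S
  card_eq : ∀ v, #(S v) = n + 1
  adj_iff : ∀ {v w}, v ≠ w → (G.Adj v w ↔ #(S v ∩ S w) = n)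

theorem IsJIS.exists_isJohnsonRep {V : Type*} [Fintype V] {G : SimpleGraph V} (hG : IsJIS G) :
    ∃ (n : ℕ) (S : V → Finset ℕ), IsJohnsonRep G n S := by
  obtain ⟨n, hn, S, hinj, hcard, hadj⟩ := hG
  exact ⟨n - 1, S, hinj, fun v => by rw [hcard]; omega, fun hvw => hadj _ _ hvw⟩

namespace IsJohnsonRep

variable {V α : Type*} [DecidableEq α] {G : SimpleGraph V} {n : ℕ} {S : V → Finset α}
  {K K₁ K₂ : Set V} {A T : Finset α} {u v w x y₁ y₂ z : V}

theorem card_inter_eq (hS : IsJohnsonRep G n S) (h : G.Adj v w) : #(S v ∩ S w) = n :=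
  (hS.adj_iff h.ne).1 h

theorem card_inter_le (hS : IsJohnsonRep G n S) (hvw : v ≠ w) : #(S v ∩ S w) ≤ n :=
  card_inter_le_of_ne (hS.card_eq v) (hS.card_eq w) (hS.injective.ne hvw)

theorem adj_of_common_subset (hS : IsJohnsonRep G n S) (hA : #A = n) (hv : A ⊆ S v)
    (hw : A ⊆ S w) (hvw : v ≠ w) : G.Adj v w :=
  (hS.adj_iff hvw).2 <| le_antisymm (hS.card_inter_le hvw) (hA ▸ card_le_card (subset_inter hv hw))

theorem adj_of_common_superset (hS : IsJohnsonRep G n S) (hT : #T = n + 2) (hv : S v ⊆ T)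
    (hw : S w ⊆ T) (hvw : v ≠ w) : G.Adj v w := by
  refine (hS.adj_iff hvw).2 (le_antisymm (hS.card_inter_le hvw) ?_)
  have hunion := card_le_card (union_subset hv hw)
  have := card_union_add_card_inter (S v) (S w)
  rw [hS.card_eq, hS.card_eq] at this
  omega

theorem isClique_of_common_subset (hS : IsJohnsonRep G n S) (hA : #A = n)
    (h : ∀ v ∈ K, A ⊆ S v) : G.IsClique K :=
  fun v hv w hw hvw => hS.adj_of_common_subset hA (h v hv) (h w hw) hvw

theorem isClique_of_common_superset (hS : IsJohnsonRep G n S) (hT : #T = n + 2)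
    (h : ∀ v ∈ K, S v ⊆ T) : G.IsClique K :=
  fun v hv w hw hvw => hS.adj_of_common_superset hT (h v hv) (h w hw) hvw

theorem inter_subset_or_subset_union (hS : IsJohnsonRep G n S) (hy : G.Adj y₁ y₂)
    (h₁ : G.Adj z y₁) (h₂ : G.Adj z y₂) : S y₁ ∩ S y₂ ⊆ S z ∨ S z ⊆ S y₁ ∪ S y₂ :=
  Finset.inter_subset_or_subset_union (hS.card_eq _) (hS.card_eq _) (hS.card_eq _)
    (hS.card_inter_eq hy) (hS.card_inter_eq h₁) (hS.card_inter_eq h₂)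

theorem forall_inter_subset_or_forall_subset_union (hS : IsJohnsonRep G n S)
    (hK : G.IsClique K) (hy : G.Adj y₁ y₂) (hy₁ : y₁ ∈ K) (hy₂ : y₂ ∈ K) :
    (∀ z ∈ K, S y₁ ∩ S y₂ ⊆ S z) ∨ ∀ z ∈ K, S z ⊆ S y₁ ∪ S y₂ := by
  have htype : ∀ z ∈ K, S y₁ ∩ S y₂ ⊆ S z ∨ S z ⊆ S y₁ ∪ S y₂ := by
    intro z hz
    by_cases hz₁ : z = y₁
    · exact Or.inl (hz₁ ▸ inter_subset_left)
    by_cases hz₂ : z = y₂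
    · exact Or.inl (hz₂ ▸ inter_subset_right)
    exact hS.inter_subset_or_subset_union hy (hK hz hy₁ hz₁) (hK hz hy₂ hz₂)
  by_contra! ⟨⟨z, hz, hAz⟩, ⟨z', hz', hz'T⟩⟩
  have hzT := (htype z hz).resolve_left hAz
  have hAz' := (htype z' hz').resolve_right hz'T
  have hzz' : z ≠ z' := fun h => hAz (h ▸ hAz')
  rcases subset_or_subset_of_card_inter (hS.card_eq z') (hS.card_inter_eq (hK hz hz' hzz'))
    hAz' hzT (inter_subset_left.trans subset_union_left) with h | h
  exacts [hAz h, hz'T h]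

theorem isClique_union (hS : IsJohnsonRep G n S) (hK₁ : G.IsClique K₁) (hK₂ : G.IsClique K₂)
    (hu : u ∈ K₁ ∩ K₂) (hy₁ : y₁ ∈ K₁ ∩ K₂) (hy₂ : y₂ ∈ K₁ ∩ K₂) (hu₁ : u ≠ y₁) (hu₂ : u ≠ y₂)
    (hy : y₁ ≠ y₂) : G.IsClique (K₁ ∪ K₂) := by
  have hadj : G.Adj y₁ y₂ := hK₁ hy₁.1 hy₂.1 hy
  have hA : #(S y₁ ∩ S y₂) = n := hS.card_inter_eq hadj
  have hT : #(S y₁ ∪ S y₂) = n + 2 := card_union_eq_of_card_inter (hS.card_eq _) (hS.card_eq _) hA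
  have hu_type : ¬(S y₁ ∩ S y₂ ⊆ S u ∧ S u ⊆ S y₁ ∪ S y₂) := fun ⟨hAu, huT⟩ =>
    (eq_or_eq_of_inter_subset_of_subset_union (hS.card_eq _) (hS.card_eq _) (hS.card_eq _) hA
      hAu huT).elim (fun h => hu₁ (hS.injective h)) (fun h => hu₂ (hS.injective h))
  rcases hS.forall_inter_subset_or_forall_subset_union hK₁ hadj hy₁.1 hy₂.1 with h₁ | h₁ <;>
    rcases hS.forall_inter_subset_or_forall_subset_union hK₂ hadj hy₁.2 hy₂.2 with h₂ | h₂
  · exact hS.isClique_of_common_subset hA fun z hz => hz.elim (h₁ z) (h₂ z)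
  · exact absurd ⟨h₁ u hu.1, h₂ u hu.2⟩ hu_type
  · exact absurd ⟨h₂ u hu.2, h₁ u hu.1⟩ hu_type
  · exact hS.isClique_of_common_superset hT fun z hz => hz.elim (h₁ z) (h₂ z)

theorem mem_of_adj_of_adj_of_adj (hS : IsJohnsonRep G n S) (hK : IsMaxClique G K) (hu : u ∈ K)
    (hy₁ : y₁ ∈ K) (hy₂ : y₂ ∈ K) (hu₁ : u ≠ y₁) (hu₂ : u ≠ y₂) (hy : y₁ ≠ y₂)
    (hxu : G.Adj x u) (hxy₁ : G.Adj x y₁) (hxy₂ : G.Adj x y₂) : x ∈ K := by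
  have hK₂ : G.IsClique (insert x {u, y₁, y₂}) := by
    refine (hK.1.subset ?_).insert ?_
    · simp [Set.insert_subset_iff, hu, hy₁, hy₂]
    · rintro b (rfl | rfl | rfl) - <;> assumption
  have hunion := hK.2 _ (hS.isClique_union hK.1 hK₂ ⟨hu, by simp⟩ ⟨hy₁, by simp⟩ ⟨hy₂, by simp⟩
    hu₁ hu₂ hy) Set.subset_union_left
  exact hunion ▸ Set.mem_union_right K (Set.mem_insert x _)

theorem subsingleton_adj_diff (hS : IsJohnsonRep G n S) {L L' : Set V} (hL : G.IsClique L)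
    (hL' : IsMaxClique G L') (hu : u ∈ L ∩ L') (hx : x ∈ L \ L') :
    {y ∈ L' \ L | G.Adj x y}.Subsingleton := by
  rintro y₁ ⟨⟨hy₁L', hy₁L⟩, hxy₁⟩ y₂ ⟨⟨hy₂L', hy₂L⟩, hxy₂⟩
  by_contra hy
  have hu_ne : ∀ {y}, y ∉ L → u ≠ y := fun hy h => hy (h ▸ hu.1)
  have hxu : G.Adj x u := hL hx.1 hu.1 fun h => hx.2 (h ▸ hu.2)
  exact hx.2 (hS.mem_of_adj_of_adj_of_adj hL' hu.2 hy₁L' hy₂L' (hu_ne hy₁L) (hu_ne hy₂L) hy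
    hxu hxy₁ hxy₂)

end IsJohnsonRep

theorem maxcliques_share_one_adj_le_one_general {V : Type*} [Fintype V] (G : SimpleGraph V)
    (hG : IsJIS G) (L L' : Set V) (hL : IsMaxClique G L) (hL' : IsMaxClique G L')
    (hshare : (L ∩ L').ncard = 1) :
    (∀ x ∈ L \ L', {y ∈ L' \ L | G.Adj x y}.ncard ≤ 1) ∧
    (∀ y ∈ L' \ L, {x ∈ L \ L' | G.Adj y x}.ncard ≤ 1) := by
  obtain ⟨n, S, hS⟩ := hG.exists_isJohnsonRep
  obtain ⟨u, hu⟩ := Set.ncard_eq_one.1 hshare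
  have huL : u ∈ L ∩ L' := hu ▸ Set.mem_singleton u
  refine ⟨fun x hx => ?_, fun y hy => ?_⟩
  · exact Set.ncard_le_one_iff_subsingleton.2 (hS.subsingleton_adj_diff hL.1 hL' huL hx)
  · exact Set.ncard_le_one_iff_subsingleton.2
      (hS.subsingleton_adj_diff hL'.1 hL (Set.inter_comm L L' ▸ huL) hy)

/-- if two distinct maxcliques of a JIS graph share exactly one vertex,
then each vertex in either of `L \ L'` and `L' \ L` is adjacent to at most one vertex
of the other set. -/
theorem maxcliques_share_one_adj_le_one {V : Type*} [Fintype V] (G : SimpleGraph V)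
    (hG : IsJIS G) (L L' : Set V) (hL : IsMaxClique G L) (hL' : IsMaxClique G L')
    (hne : L ≠ L') (hshare : (L ∩ L').ncard = 1) :
    (∀ x ∈ L \ L', {y ∈ L' \ L | G.Adj x y}.ncard ≤ 1) ∧
    (∀ y ∈ L' \ L, {x ∈ L \ L' | G.Adj y x}.ncard ≤ 1) :=
  maxcliques_share_one_adj_le_one_general G hG L L' hL hL' hshare
end

section
/- Let G be a finite simple graph and suppose L_1, …, L_k are pairwise distinct maxcliques in G, where k is odd and k ≥ 3, such that |V(L_i) ∩ V(L_{i+1})| = 2 for all 1 ≤ i ≤ k − 1 and |V(L_k) ∩ V(L_1)| = 2. Then G is not JIS. -/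
open Finset

theorem not_alternating_of_odd_nsmul_eq_zero {M : Type*} [AddMonoid M] {k : ℕ} (hk : Odd k)
    {g : M} (hg : k • g = 0) (p : M → Prop) : ¬ ∀ x, (p (x + g) ↔ ¬ p x) := by
  intro hp
  have key : ∀ m : ℕ, p (m • g) ↔ (p 0 ↔ Even m) := by
    intro m
    induction m with
    | zero => simp
    | succ m ih => rw [succ_nsmul, hp, ih, Nat.even_add_one]; tauto
  have := key k
  rw [hg, iff_false_intro (Nat.not_even_iff_odd.mpr hk)] at this
  tauto

theorem IsMaxClique.not_isClique_union {V : Type*} {G : SimpleGraph V} {C D : Set V}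
    (hC : IsMaxClique G C) (hD : IsMaxClique G D) (hCD : C ≠ D) : ¬ G.IsClique (C ∪ D) :=
  fun h => hCD ((hC.2 _ h Set.subset_union_left).symm.trans (hD.2 _ h Set.subset_union_right))

namespace Finset

variable {α : Type*} [DecidableEq α] {n : ℕ} {X Y Z W : Finset α}

theorem card_inter_lt_of_ne (hX : #X = n) (hY : #Y = n) (hXY : X ≠ Y) : #(X ∩ Y) < n := by
  have hXY : ¬ X ⊆ Y := fun h => hXY (eq_of_subset_of_card_le h (by omega))
  exact hX ▸ card_lt_card (inf_lt_left.mpr hXY)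

theorem inter_subset_or_subset_union_s4 (hZ : #Z = n) (hXY : #(X ∩ Y) = n - 1)
    (hXZ : #(X ∩ Z) = n - 1) (hYZ : #(Y ∩ Z) = n - 1) : X ∩ Y ⊆ Z ∨ Z ⊆ X ∪ Y := by
  by_contra! h
  have hlt₁ : #(X ∩ Y ∩ Z) < #(X ∩ Y) := card_lt_card (inf_lt_left.mpr h.1)
  have hlt₂ : #(Z ∩ (X ∪ Y)) < #Z := card_lt_card (inf_lt_left.mpr h.2)
  have hsum : #(Z ∩ (X ∪ Y)) + #(X ∩ Y ∩ Z) = #(X ∩ Z) + #(Y ∩ Z) := by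
    rw [inter_comm Z, union_inter_distrib_right, inter_inter_distrib_right,
      card_union_add_card_inter]
  omega

theorem card_inter_lt_of_inter_subset_of_subset_union_s4 (hXY : #(X ∩ Y) = n - 1)
    (hWX : #(W ∩ X) = n - 1) (hWY : #(W ∩ Y) = n - 1) (hW : X ∩ Y ⊆ W)
    (hZ : Z ⊆ X ∪ Y) (hZ' : ¬ X ∩ Y ⊆ Z) : #(W ∩ Z) < n - 1 := by
  have hWX' : W ∩ X = X ∩ Y :=
    (eq_of_subset_of_card_le (subset_inter hW inter_subset_left) (by omega)).symm
  have hWY' : W ∩ Y = X ∩ Y :=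
    (eq_of_subset_of_card_le (subset_inter hW inter_subset_right) (by omega)).symm
  have hWZ : W ∩ Z ⊆ X ∩ Y ∩ Z := by
    calc W ∩ Z ⊆ W ∩ (X ∪ Y) ∩ Z :=
          subset_inter (inter_subset_inter_left hZ) inter_subset_right
      _ = X ∩ Y ∩ Z := by rw [inter_union_distrib_left, hWX', hWY', union_self]
  calc #(W ∩ Z) ≤ #(X ∩ Y ∩ Z) := card_le_card hWZ
    _ < #(X ∩ Y) := card_lt_card (inf_lt_left.mpr hZ')
    _ = n - 1 := hXY

end Finset

structure IsJohnsonEmbedding {V α : Type*} [DecidableEq α] (G : SimpleGraph V) (n : ℕ)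
    (S : V → Finset α) : Prop where
  injective : Function.Injective S
  card_eq : ∀ v, #(S v) = n
  adj_iff : ∀ v w, v ≠ w → (G.Adj v w ↔ #(S v ∩ S w) = n - 1)

def IsStar {V α : Type*} (S : V → Finset α) (n : ℕ) (C : Set V) : Prop :=
  ∃ A : Finset α, #A = n - 1 ∧ ∀ u ∈ C, A ⊆ S u

namespace IsJohnsonEmbedding

variable {V α : Type*} [DecidableEq α] {G : SimpleGraph V} {n : ℕ} {S : V → Finset α}
  {C D : Set V} {v w : V}

theorem card_inter_of_adj (hS : IsJohnsonEmbedding G n S) (h : G.Adj v w) :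
    #(S v ∩ S w) = n - 1 :=
  (hS.adj_iff v w h.ne).mp h

theorem adj_of_le_card_inter (hS : IsJohnsonEmbedding G n S) (hvw : v ≠ w)
    (h : n - 1 ≤ #(S v ∩ S w)) : G.Adj v w := by
  have := card_inter_lt_of_ne (hS.card_eq v) (hS.card_eq w) (hS.injective.ne hvw)
  exact (hS.adj_iff v w hvw).mpr (by omega)

theorem isClique_of_forall_subset (hS : IsJohnsonEmbedding G n S) {A : Finset α}
    (hA : #A = n - 1) (hC : ∀ u ∈ C, A ⊆ S u) : G.IsClique C :=
  fun x hx y hy hxy => hS.adj_of_le_card_inter hxy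
    (hA ▸ card_le_card (subset_inter (hC x hx) (hC y hy)))

theorem isClique_of_forall_subset_union (hS : IsJohnsonEmbedding G n S) {B : Finset α}
    (hB : #B ≤ n + 1) (hC : ∀ u ∈ C, S u ⊆ B) : G.IsClique C := by
  intro x hx y hy hxy
  have hunion := card_le_card (union_subset (hC x hx) (hC y hy))
  have := card_union_add_card_inter (S x) (S y)
  rw [hS.card_eq, hS.card_eq] at this
  exact hS.adj_of_le_card_inter hxy (by omega)

theorem isStar_iff (hS : IsJohnsonEmbedding G n S) (hC : G.IsClique C) (hv : v ∈ C)
    (hw : w ∈ C) (hvw : v ≠ w) : IsStar S n C ↔ ∀ u ∈ C, S v ∩ S w ⊆ S u := by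
  have hcard := hS.card_inter_of_adj (hC hv hw hvw)
  refine ⟨fun ⟨A, hA, hAC⟩ => ?_, fun h => ⟨_, hcard, h⟩⟩
  have : A = S v ∩ S w :=
    eq_of_subset_of_card_le (subset_inter (hAC v hv) (hAC w hw)) (by omega)
  exact this ▸ hAC

theorem forall_inter_subset_or_forall_subset_union (hS : IsJohnsonEmbedding G n S)
    (hC : G.IsClique C) (hv : v ∈ C) (hw : w ∈ C) (hvw : v ≠ w) :
    (∀ u ∈ C, S v ∩ S w ⊆ S u) ∨ ∀ u ∈ C, S u ⊆ S v ∪ S w := by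
  refine or_iff_not_imp_left.mpr fun h u hu => ?_
  push Not at h
  obtain ⟨z, hz, hvwz⟩ := h
  have hcard {x y} (hx : x ∈ C) (hy : y ∈ C) (hxy : x ≠ y) : #(S x ∩ S y) = n - 1 :=
    hS.card_inter_of_adj (hC hx hy hxy)
  have hdichotomy {x} (hx : x ∈ C) (hxv : x ≠ v) (hxw : x ≠ w) :
      S v ∩ S w ⊆ S x ∨ S x ⊆ S v ∪ S w :=
    inter_subset_or_subset_union_s4 (hS.card_eq x) (hcard hv hw hvw) (hcard hv hx hxv.symm)
      (hcard hw hx hxw.symm)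
  have hzv : z ≠ v := by rintro rfl; exact hvwz inter_subset_left
  have hzw : z ≠ w := by rintro rfl; exact hvwz inter_subset_right
  have hz' : S z ⊆ S v ∪ S w := (hdichotomy hz hzv hzw).resolve_left hvwz
  by_cases huv : u = v
  · exact huv ▸ subset_union_left
  by_cases huw : u = w
  · exact huw ▸ subset_union_right
  refine (hdichotomy hu huv huw).resolve_left fun hvwu => ?_
  have huz : u ≠ z := by rintro rfl; exact hvwz hvwu
  have := card_inter_lt_of_inter_subset_of_subset_union_s4 (hcard hv hw hvw) (hcard hu hv huv)
    (hcard hu hw huw) hvwu hz' hvwz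
  exact this.ne (hcard hu hz huz)

theorem isStar_iff_not_isStar (hS : IsJohnsonEmbedding G n S) (hC : G.IsClique C)
    (hD : G.IsClique D) (hCD : ¬ G.IsClique (C ∪ D)) (hv : v ∈ C ∩ D) (hw : w ∈ C ∩ D)
    (hvw : v ≠ w) : IsStar S n D ↔ ¬ IsStar S n C := by
  rw [hS.isStar_iff hC hv.1 hw.1 hvw, hS.isStar_iff hD hv.2 hw.2 hvw]
  constructor
  · intro hDstar hCstar
    exact hCD (hS.isClique_of_forall_subset (hS.card_inter_of_adj (hC hv.1 hw.1 hvw))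
      fun u hu => hu.elim (hCstar u) (hDstar u))
  · intro hCstar
    by_contra hDstar
    have hunion : #(S v ∪ S w) ≤ n + 1 := by
      have := card_union_add_card_inter (S v) (S w)
      rw [hS.card_eq, hS.card_eq, hS.card_inter_of_adj (hC hv.1 hw.1 hvw)] at this
      omega
    have hCtop := (hS.forall_inter_subset_or_forall_subset_union hC hv.1 hw.1 hvw).resolve_left
      hCstar
    have hDtop := (hS.forall_inter_subset_or_forall_subset_union hD hv.2 hw.2 hvw).resolve_left
      hDstar
    exact hCD (hS.isClique_of_forall_subset_union hunion fun u hu => hu.elim (hCtop u) (hDtop u))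

end IsJohnsonEmbedding

/-- if a graph `G` has an odd cycle of `k ≥ 3` pairwise distinct maxcliques,
consecutive ones (cyclically) sharing exactly two vertices, then `G` is not JIS.
(Addition in `Fin k` is modulo `k`, so `hshare` covers both the consecutive pairs and
the wrap-around pair `L_k, L_1`.) -/
theorem odd_cycle_of_maxcliques_not_JIS {V : Type*} [Fintype V] (G : SimpleGraph V)
    (k : ℕ) (hk : 3 ≤ k) (hodd : Odd k) (L : Fin k → Set V)
    (hmax : ∀ i, IsMaxClique G (L i))
    (hdist : Function.Injective L)
    (hshare : ∀ i : Fin k, (L i ∩ L (i + ⟨1, by omega⟩)).ncard = 2) :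
    ¬ IsJIS G := by
  rintro ⟨n, -, S, hinj, hcard, hadj⟩
  have hS : IsJohnsonEmbedding G n S := ⟨hinj, hcard, hadj⟩
  have : NeZero k := ⟨by omega⟩
  have hperiod : k • (⟨1, by omega⟩ : Fin k) = 0 := by
    simpa using card_nsmul_eq_zero (G := Fin k)
  refine not_alternating_of_odd_nsmul_eq_zero hodd hperiod (fun i => IsStar S n (L i)) fun i => ?_
  obtain ⟨v, w, hvw, hL⟩ := Set.ncard_eq_two.mp (hshare i)
  have hi : i ≠ i + ⟨1, by omega⟩ := by simp [Fin.ext_iff]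
  exact hS.isStar_iff_not_isStar (hmax i).1 (hmax _).1
    ((hmax i).not_isClique_union (hmax _) (hdist.ne hi)) (hL ▸ Set.mem_insert v {w})
    (hL ▸ Set.mem_insert_of_mem v rfl) hvw
end

section
/- For every integer n ≥ 3, the cycle graph C_n on n vertices is JIS. -/
open Finset

theorem isJIS_of_embedding {V α : Type*} [Fintype V] [DecidableEq α] (G : SimpleGraph V)
    (ι : α ↪ ℕ) {k : ℕ} (hk : 0 < k) (S : V → Finset α) (hS : Function.Injective S)
    (hcard : ∀ v, #(S v) = k) (hadj : ∀ v w, v ≠ w → (G.Adj v w ↔ #(S v ∩ S w) = k - 1)) :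
    IsJIS G := by
  refine ⟨k, hk, fun v => (S v).map ι, (map_injective ι).comp hS, fun v => ?_, fun v w hvw => ?_⟩
  · rw [card_map, hcard]
  · rw [← map_inter, card_map, hadj v w hvw]

theorem Finset.card_inter_lt_of_card_eq {α : Type*} [DecidableEq α] {s t : Finset α} {k : ℕ}
    (hs : #s = k) (ht : #t = k) (hst : s ≠ t) : #(s ∩ t) < k := by
  by_contra! h
  have hs' : s ∩ t = s := eq_of_subset_of_card_le inter_subset_left (hs ▸ h)
  have ht' : s ∩ t = t := eq_of_subset_of_card_le inter_subset_right (ht ▸ h)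
  exact hst (hs'.symm.trans ht')

theorem Finset.card_inter_eq_one_iff_not_disjoint {α : Type*} [DecidableEq α] {s t : Finset α}
    (hs : #s = 2) (ht : #t = 2) (hst : s ≠ t) : #(s ∩ t) = 1 ↔ ¬Disjoint s t := by
  have := card_inter_lt_of_card_eq hs ht hst
  rw [not_disjoint_iff_nonempty_inter, ← card_pos]
  omega

section AddGroup

variable {A : Type*} [AddGroup A] [DecidableEq A] {d : A}

theorem card_pair_add_right (hd : d ≠ 0) (i : A) : #({i, i + d} : Finset A) = 2 :=
  card_pair fun h => hd (by simpa using h)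

theorem injective_pair_add_right (hd : d + d ≠ 0) :
    Function.Injective fun i : A => ({i, i + d} : Finset A) := by
  intro i j (hij : ({i, i + d} : Finset A) = {j, j + d})
  have hi : i ∈ ({j, j + d} : Finset A) := hij ▸ mem_insert_self i _
  have hj : j ∈ ({i, i + d} : Finset A) := hij ▸ mem_insert_self j _
  simp only [mem_insert, mem_singleton] at hi hj
  rcases hi with hi | hi
  · exact hi
  rcases hj with hj | hj
  · exact hj.symm
  exact absurd (by simpa [hj, add_assoc] using hi) hd

theorem card_inter_pair_add_right_eq_one_iff (hd : d ≠ 0) (hd2 : d + d ≠ 0) {i j : A}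
    (hij : i ≠ j) :
    #(({i, i + d} : Finset A) ∩ {j, j + d}) = 1 ↔ i + d = j ∨ j + d = i := by
  rw [card_inter_eq_one_iff_not_disjoint (card_pair_add_right hd i) (card_pair_add_right hd j)
    ((injective_pair_add_right hd2).ne hij)]
  simp only [disjoint_insert_left, disjoint_insert_right, disjoint_singleton, mem_insert,
    mem_singleton, ne_eq, add_left_inj, hij, hij.symm, false_or, not_and_or, not_not]
  rw [eq_comm (a := i), eq_comm (a := j), or_false]

theorem isJIS_fromRel_add_right [Fintype A] (hd : d ≠ 0) (hd2 : d + d ≠ 0) :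
    IsJIS (SimpleGraph.fromRel fun i j : A => i + d = j) := by
  refine isJIS_of_embedding _ ((Fintype.equivFin A).toEmbedding.trans Fin.valEmbedding)
    two_pos (fun i => {i, i + d}) (injective_pair_add_right hd2) (card_pair_add_right hd)
    fun i j hij => ?_
  change _ ↔ _ = 1
  rw [SimpleGraph.fromRel_adj, card_inter_pair_add_right_eq_one_iff hd hd2 hij]
  exact and_iff_right hij

end AddGroup

/-- for every `n ≥ 3`, the cycle graph `C_n` on `n` vertices
(vertex `i` adjacent to `i ± 1` modulo `n`) is JIS. -/
theorem cycle_graph_isJIS (n : ℕ) (hn : 3 ≤ n) :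
    letI : NeZero n := ⟨by omega⟩
    IsJIS (SimpleGraph.fromRel (fun i j : ZMod n => i + 1 = j)) := by
  have : NeZero n := ⟨by omega⟩
  have natCast_ne_zero {m : ℕ} (hm : 0 < m) (hmn : m < n) : (m : ZMod n) ≠ 0 := by
    rw [ne_eq, ZMod.natCast_eq_zero_iff]
    exact fun h => absurd (Nat.le_of_dvd hm h) (by omega)
  refine isJIS_fromRel_add_right (by exact_mod_cast natCast_ne_zero one_pos (by omega)) ?_
  rw [one_add_one_eq_two]
  exact_mod_cast natCast_ne_zero two_pos (by omega)
end

section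
/- Let G' be a finite simple graph, let w be a vertex of G' of degree at most 1, and let G be the induced subgraph of G' on the vertex set V(G') \ {w}. Then G' is JIS if and only if G is JIS. -/
open Finset

section

variable {V W : Type*}

/-- `IsJIS G` unfolds to `∃ n, 0 < n ∧ ∃ S, IsJohnsonRepr G n S`. -/
def IsJohnsonRepr (G : SimpleGraph V) (n : ℕ) (S : V → Finset ℕ) : Prop :=
  Function.Injective S ∧ (∀ v, #(S v) = n) ∧
    ∀ v w : V, v ≠ w → (G.Adj v w ↔ #(S v ∩ S w) = n - 1)

theorem Finset.card_inter_eq_iff_eq {α : Type*} [DecidableEq α] {s t : Finset α} {n : ℕ}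
    (hs : #s = n) (ht : #t = n) : #(s ∩ t) = n ↔ s = t := by
  refine ⟨fun h => ?_, fun h => by rw [h, inter_self, ht]⟩
  have hst : s ∩ t = s := eq_of_subset_of_card_le inter_subset_left (by omega)
  exact (subset_iff_eq_of_card_le (by omega)).mp (inter_eq_left.mp hst)

theorem Finset.exists_forall_subset_range {ι : Type*} [Finite ι] (S : ι → Finset ℕ) :
    ∃ N, ∀ i, S i ⊆ range N := by
  have := Fintype.ofFinite ι
  obtain ⟨N, hN⟩ := (univ.biUnion S).exists_nat_subset_range
  exact ⟨N, fun i => (subset_biUnion_of_mem S (mem_univ i)).trans hN⟩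

theorem SimpleGraph.neighborSet_subsingleton_of_degree_le_one {G : SimpleGraph V} {v : V}
    [Fintype (G.neighborSet v)] (h : G.degree v ≤ 1) : (G.neighborSet v).Subsingleton :=
  fun x hx y hy => card_le_one.mp h x (by simpa using hx) y (by simpa using hy)

namespace IsJohnsonRepr

variable {G : SimpleGraph V} {n : ℕ} {S : V → Finset ℕ}

theorem comap (hS : IsJohnsonRepr G n S) (f : W ↪ V) :
    IsJohnsonRepr (G.comap f) n (S ∘ f) :=
  ⟨hS.1.comp f.injective, fun v => hS.2.1 (f v),
    fun v w hvw => hS.2.2 (f v) (f w) (f.injective.ne hvw)⟩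

theorem insert_fresh (hS : IsJohnsonRepr G n S) (hn : 0 < n) {N : ℕ} (hN : ∀ v, N ∉ S v) :
    IsJohnsonRepr G (n + 1) (fun v => insert N (S v)) := by
  refine ⟨fun v w h => ?_, fun v => by rw [card_insert_of_notMem (hN v), hS.2.1],
    fun v w hvw => ?_⟩
  · apply hS.1
    rw [← erase_insert (hN v), ← erase_insert (hN w)]
    exact congrArg (·.erase N) h
  · rw [← insert_inter_distrib, card_insert_of_notMem fun h => hN v (mem_inter.mp h).1,
      hS.2.2 v w hvw]
    omega

theorem exists_eq_iff_of_subsingleton [Finite V] (hS : IsJohnsonRepr G n S) (hn : 0 < n)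
    {P : V → Prop} (hP : {v | P v}.Subsingleton) :
    ∃ A : Finset ℕ, #A = n ∧ ∀ v, P v ↔ S v = A := by
  by_cases hu : ∃ u, P u
  · obtain ⟨u, hu⟩ := hu
    exact ⟨S u, hS.2.1 u, fun v => ⟨fun hv => by rw [hP hv hu], fun h => hS.1 h ▸ hu⟩⟩
  · replace hu := not_exists.mp hu
    obtain ⟨N, hN⟩ := exists_forall_subset_range S
    refine ⟨Ico N (N + n), by simp, fun v => iff_of_false (hu v) fun h => ?_⟩
    have hNv : N ∈ S v := h ▸ mem_Ico.mpr ⟨le_rfl, by omega⟩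
    simpa using hN v hNv

theorem extend [DecidableEq V] {w : V} {m : ℕ} {R : {v | v ≠ w} → Finset ℕ}
    (hR : IsJohnsonRepr (G.induce {v | v ≠ w}) m R) {T : Finset ℕ} (hT : #T = m)
    (hTR : ∀ v, T ≠ R v) (hadj : ∀ v : {v | v ≠ w}, G.Adj w v ↔ #(T ∩ R v) = m - 1) :
    IsJohnsonRepr G m (fun v => if h : v = w then T else R ⟨v, h⟩) := by
  refine ⟨fun a b h => ?_, fun v => ?_, fun a b hab => ?_⟩
  · by_cases ha : a = w <;> by_cases hb : b = w <;> simp only [ha, hb, dite_true, dite_false] at h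
    · exact ha.trans hb.symm
    · exact absurd h (hTR _)
    · exact absurd h.symm (hTR _)
    · exact congrArg Subtype.val (hR.1 h)
  · by_cases hv : v = w <;> simp only [hv, dite_true, dite_false, hT, hR.2.1]
  · by_cases ha : a = w <;> by_cases hb : b = w <;> simp only [ha, hb, dite_true, dite_false]
    · exact absurd (ha.trans hb.symm) hab
    · exact ha ▸ hadj ⟨b, hb⟩
    · rw [G.adj_comm, inter_comm]
      exact hb ▸ hadj ⟨a, ha⟩
    · exact hR.2.2 ⟨a, ha⟩ ⟨b, hb⟩ fun h => hab (congrArg Subtype.val h)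

theorem exists_extend [Finite V] [DecidableEq V] {w : V} {S : {v | v ≠ w} → Finset ℕ}
    (hS : IsJohnsonRepr (G.induce {v | v ≠ w}) n S) (hn : 0 < n) {A : Finset ℕ} (hA : #A = n)
    (hAS : ∀ v : {v | v ≠ w}, G.Adj w v ↔ S v = A) : ∃ S', IsJohnsonRepr G (n + 1) S' := by
  obtain ⟨N, hN⟩ := exists_forall_subset_range (Option.elim · A S)
  have hAN : ∀ k, N ≤ k → k ∉ A := fun k hk h =>
    absurd (mem_range.mp (hN none h)) (by omega)
  have hSN : ∀ v, ∀ k, N ≤ k → k ∉ S v := fun v k hk h =>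
    absurd (mem_range.mp (hN (some v) h)) (by omega)
  refine ⟨_, (hS.insert_fresh hn (hSN · N le_rfl)).extend (T := insert (N + 1) A) ?_ ?_ ?_⟩
  · rw [card_insert_of_notMem (hAN _ (by omega)), hA]
  · intro v h
    have hN' : N ∈ insert (N + 1) A := h ▸ mem_insert_self N (S v)
    exact hAN N le_rfl ((mem_insert.mp hN').resolve_left (by omega))
  · intro v
    have hT : insert (N + 1) A ∩ insert N (S v) = A ∩ S v := by
      rw [insert_inter_of_notMem, inter_insert_of_notMem (hAN N le_rfl)]
      exact fun h => (mem_insert.mp h).elim (by omega) (hSN v _ (by omega))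
    rw [hT, Nat.add_sub_cancel, card_inter_eq_iff_eq hA (hS.2.1 v), hAS, eq_comm]

end IsJohnsonRepr

end

/-- if `w` is a vertex of degree at most 1 of a finite simple graph `G'`
and `G` is the induced subgraph of `G'` on the remaining vertices, then
`G'` is JIS if and only if `G` is JIS. -/
theorem isJIS_iff_isJIS_delete_low_degree_vertex {V : Type*} [Fintype V] [DecidableEq V]
    (G' : SimpleGraph V) [DecidableRel G'.Adj] (w : V) (hw : G'.degree w ≤ 1) :
    IsJIS G' ↔ IsJIS (G'.induce {v : V | v ≠ w}) := by
  constructor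
  · rintro ⟨n, hn, S, hS : IsJohnsonRepr _ n S⟩
    exact ⟨n, hn, _, hS.comap (Function.Embedding.subtype _)⟩
  · rintro ⟨n, hn, S, hS : IsJohnsonRepr _ n S⟩
    have hP : {v : {v : V | v ≠ w} | G'.Adj w v}.Subsingleton :=
      (G'.neighborSet_subsingleton_of_degree_le_one hw).preimage Subtype.val_injective
    obtain ⟨A, hA, hAS⟩ := hS.exists_eq_iff_of_subsingleton hn hP
    exact ⟨n + 1, n.succ_pos, hS.exists_extend hn hA hAS⟩
end

section
/- Every finite tree (a finite connected acyclic simple graph) is JIS. -/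
/-! Root the tree at a vertex `r` and send each vertex `v` to the vertex set `A v` of the path
from `r` to `v`. Two vertices are adjacent exactly when one is the parent of the other, i.e. when
`A v` and `A w` differ in a single element, so the tree is an induced subgraph of the hypercube
of subsets of `V`. The hypercube in turn sits inside the Johnson graph of `|V|`-subsets of
`V ⊕ V` via `s ↦ s ⊔ sᶜ`, because `|(s ⊔ sᶜ) ∩ (t ⊔ tᶜ)| = |V| - |s ∆ t|`. -/

open Finset
open scoped symmDiff

namespace Finset

variable {α : Type*} [DecidableEq α]

theorem card_symmDiff_eq_one_iff {s t : Finset α} :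
    #(s ∆ t) = 1 ↔ (s ⊆ t ∧ #t = #s + 1) ∨ (t ⊆ s ∧ #s = #t + 1) := by
  rw [Finset.symmDiff_def, card_union_of_disjoint disjoint_sdiff_sdiff,
    ← card_sdiff_add_card_inter s t, ← card_sdiff_add_card_inter t s, inter_comm t s,
    ← sdiff_eq_empty_iff_subset, ← sdiff_eq_empty_iff_subset, ← card_eq_zero, ← card_eq_zero]
  omega

theorem disjSum_inter_disjSum {β : Type*} [DecidableEq β] (s₁ s₂ : Finset α) (t₁ t₂ : Finset β) :
    s₁.disjSum t₁ ∩ s₂.disjSum t₂ = (s₁ ∩ s₂).disjSum (t₁ ∩ t₂) := by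
  ext (a | b) <;> simp

theorem card_disjSum_compl_inter_add_card_symmDiff [Fintype α] (s t : Finset α) :
    #(s.disjSum sᶜ ∩ t.disjSum tᶜ) + #(s ∆ t) = Fintype.card α := by
  rw [disjSum_inter_disjSum, card_disjSum, Finset.symmDiff_def,
    card_union_of_disjoint disjoint_sdiff_sdiff, ← card_add_card_compl s,
    ← card_sdiff_add_card_inter s t, ← card_sdiff_add_card_inter sᶜ t]
  simp only [sdiff_eq_inter_compl, inter_comm]
  omega

end Finset

theorem isJIS_of_adj_iff_card_symmDiff_eq_one {V α : Type*} [Fintype V] [Fintype α]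
    [DecidableEq α] [Nonempty α] (G : SimpleGraph V) (B : V → Finset α) (hB : Function.Injective B)
    (hadj : ∀ v w, v ≠ w → (G.Adj v w ↔ #(B v ∆ B w) = 1)) : IsJIS G := by
  obtain ⟨e, he⟩ := Countable.exists_injective_nat (α ⊕ α)
  let S v := ((B v).disjSum (B v)ᶜ).map ⟨e, he⟩
  have hS v w : #(S v ∩ S w) + #(B v ∆ B w) = Fintype.card α := by
    rw [← map_inter, card_map, card_disjSum_compl_inter_add_card_symmDiff]
  have hcard v : #(S v) = Fintype.card α := by
    simpa [symmDiff_self] using hS v v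
  refine ⟨Fintype.card α, Fintype.card_pos, S, fun v w hvw => hB ?_, hcard, fun v w hvw => ?_⟩
  · have := hS v w
    rwa [hvw, inter_self, hcard, add_eq_left, card_eq_zero, symmDiff_eq_empty] at this
  · have hsum := hS v w
    have hpos := Fintype.card_pos (α := α)
    rw [hadj v w hvw]
    omega

namespace SimpleGraph

variable {V : Type*} [DecidableEq V] {G : SimpleGraph V} {r u v w : V}

def ancestors (P : ∀ v, G.Path r v) (v : V) : Finset V :=
  (P v : G.Walk r v).support.toFinset

theorem mem_ancestors_self (P : ∀ v, G.Path r v) (v : V) : v ∈ ancestors P v := by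
  simp [ancestors]

theorem card_ancestors (P : ∀ v, G.Path r v) (v : V) :
    #(ancestors P v) = (P v : G.Walk r v).length + 1 := by
  rw [ancestors, List.toFinset_card_of_nodup (P v).2.support_nodup, Walk.length_support]

namespace IsAcyclic

variable {P : ∀ v, G.Path r v}

theorem ancestors_concat (hG : G.IsAcyclic) (h : G.Adj v w)
    (hw : w ∉ ancestors P v) : ancestors P w = insert w (ancestors P v) := by
  rw [ancestors, List.mem_toFinset] at hw
  have : P w = ⟨_, (P v).2.concat hw h⟩ := (hG.subsingleton_path r w).elim _ _
  rw [ancestors, ancestors, this, Walk.support_concat, List.toFinset_append, List.toFinset_cons,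
    List.toFinset_nil, insert_empty, union_comm, insert_eq]

theorem exists_append_eq (hG : G.IsAcyclic) (hu : u ∈ ancestors P v) :
    ∃ q : G.Walk u v, (P u : G.Walk r u).append q = P v := by
  rw [ancestors, List.mem_toFinset] at hu
  refine ⟨(P v : G.Walk r v).dropUntil u hu, ?_⟩
  have : P u = ⟨_, (P v).2.takeUntil hu⟩ := (hG.subsingleton_path r u).elim _ _
  rw [this, Walk.take_spec]

theorem ancestors_subset (hG : G.IsAcyclic) (hu : u ∈ ancestors P v) :
    ancestors P u ⊆ ancestors P v := by
  obtain ⟨q, hq⟩ := hG.exists_append_eq hu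
  intro x hx
  simp only [ancestors, List.mem_toFinset, ← hq, Walk.mem_support_append_iff] at hx ⊢
  exact Or.inl hx

theorem exists_walk_card_ancestors (hG : G.IsAcyclic) (hu : u ∈ ancestors P v) :
    ∃ q : G.Walk u v, #(ancestors P v) = #(ancestors P u) + q.length := by
  obtain ⟨q, hq⟩ := hG.exists_append_eq hu
  refine ⟨q, ?_⟩
  rw [card_ancestors, card_ancestors, ← hq, Walk.length_append]
  ring

theorem ancestors_injective (hG : G.IsAcyclic) : Function.Injective (ancestors P) := by
  intro v w h
  obtain ⟨q, hq⟩ := hG.exists_walk_card_ancestors (h ▸ mem_ancestors_self P v)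
  rw [h, left_eq_add] at hq
  exact Walk.eq_of_length_eq_zero hq

theorem adj_of_ancestors_subset (hG : G.IsAcyclic) (h : ancestors P v ⊆ ancestors P w)
    (hcard : #(ancestors P w) = #(ancestors P v) + 1) : G.Adj v w := by
  obtain ⟨q, hq⟩ := hG.exists_walk_card_ancestors (h (mem_ancestors_self P v))
  rw [hcard, add_right_inj] at hq
  exact Walk.adj_of_length_eq_one hq.symm

theorem adj_iff_card_symmDiff_ancestors_eq_one (hG : G.IsAcyclic) (hvw : v ≠ w) :
    G.Adj v w ↔ #(ancestors P v ∆ ancestors P w) = 1 := by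
  rw [card_symmDiff_eq_one_iff]
  constructor
  · intro h
    by_cases hw : w ∈ ancestors P v
    · have hv : v ∉ ancestors P w := fun hv => hvw <| hG.ancestors_injective <|
        (hG.ancestors_subset hv).antisymm (hG.ancestors_subset hw)
      rw [hG.ancestors_concat h.symm hv]
      exact Or.inr ⟨subset_insert _ _, card_insert_of_notMem hv⟩
    · rw [hG.ancestors_concat h hw]
      exact Or.inl ⟨subset_insert _ _, card_insert_of_notMem hw⟩
  · rintro (⟨h, hcard⟩ | ⟨h, hcard⟩)
    · exact hG.adj_of_ancestors_subset h hcard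
    · exact (hG.adj_of_ancestors_subset h hcard).symm

end IsAcyclic

end SimpleGraph

/-- every finite tree (finite connected acyclic simple graph) is JIS. -/
theorem tree_isJIS {V : Type*} [Fintype V] (G : SimpleGraph V) (hG : G.IsTree) :
    IsJIS G := by
  classical
  obtain ⟨r⟩ := hG.connected.nonempty
  have : Nonempty V := ⟨r⟩
  let P v : G.Path r v := (hG.connected r v).some.toPath
  exact isJIS_of_adj_iff_card_symmDiff_eq_one G (SimpleGraph.ancestors P)
    hG.isAcyclic.ancestors_injective fun _ _ => hG.isAcyclic.adj_iff_card_symmDiff_ancestors_eq_one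
end

section
/- Let G and H be finite simple graphs and let G ⊕ H denote their disjoint union (the graph on the disjoint union of the vertex sets whose edges are the edges of G together with the edges of H, with no edges between the two parts). Then G ⊕ H is JIS if and only if both G and H are JIS. -/
/-!
Restricting a labeling to one summand shows that both summands are JIS. Conversely, a labeling
by `n`-sets can be padded to one by `(n + 1)`-sets by adding a common new element to every set,
so both summands have labelings of the same size `N ≥ 2`; relabeling one into the even and the
other into the odd numbers makes every cross intersection empty, hence of size `0 ≠ N - 1`.
-/

open Finset SimpleGraph

structure IsJohnsonLabeling {V : Type*} (G : SimpleGraph V) (n : ℕ) (S : V → Finset ℕ) :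
    Prop where
  injective : Function.Injective S
  card_eq : ∀ v, #(S v) = n
  adj_iff : ∀ v w, v ≠ w → (G.Adj v w ↔ #(S v ∩ S w) = n - 1)

theorem isJIS_iff_exists_isJohnsonLabeling {V : Type*} [Fintype V] (G : SimpleGraph V) :
    IsJIS G ↔ ∃ n, 0 < n ∧ ∃ S, IsJohnsonLabeling G n S :=
  ⟨fun ⟨n, hn, S, hinj, hcard, hadj⟩ => ⟨n, hn, S, ⟨hinj, hcard, hadj⟩⟩,
    fun ⟨n, hn, S, ⟨hinj, hcard, hadj⟩⟩ => ⟨n, hn, S, hinj, hcard, hadj⟩⟩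

namespace IsJohnsonLabeling

variable {V W : Type*} {G : SimpleGraph V} {n : ℕ} {S : V → Finset ℕ}

theorem comp (hS : IsJohnsonLabeling G n S) {G' : SimpleGraph W} (f : G' ↪g G) :
    IsJohnsonLabeling G' n (S ∘ f) where
  injective := hS.injective.comp f.injective
  card_eq w := hS.card_eq (f w)
  adj_iff _ _ hvw := f.map_adj_iff.symm.trans (hS.adj_iff _ _ (f.injective.ne hvw))

theorem map (hS : IsJohnsonLabeling G n S) (f : ℕ ↪ ℕ) :
    IsJohnsonLabeling G n (fun v => (S v).map f) where
  injective _ _ h := hS.injective (map_injective f h)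
  card_eq v := by rw [card_map, hS.card_eq]
  adj_iff v w hvw := by rw [← map_inter, card_map, hS.adj_iff v w hvw]

theorem insert (hS : IsJohnsonLabeling G n S) (hn : 0 < n) {a : ℕ} (ha : ∀ v, a ∉ S v) :
    IsJohnsonLabeling G (n + 1) (fun v => insert a (S v)) where
  injective v w h := hS.injective <| by
    rw [← erase_insert (ha v), ← erase_insert (ha w)]
    exact congrArg (·.erase a) h
  card_eq v := by rw [card_insert_of_notMem (ha v), hS.card_eq]
  adj_iff v w hvw := by
    rw [← insert_inter_distrib, card_insert_of_notMem fun h => ha v (mem_inter.1 h).1,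
      hS.adj_iff v w hvw]
    omega

theorem exists_of_le (hS : IsJohnsonLabeling G n S) (hn : 0 < n) {m : ℕ} (hnm : n ≤ m) :
    ∃ T, IsJohnsonLabeling G m T := by
  induction m, hnm using Nat.le_induction with
  | base => exact ⟨S, hS⟩
  | succ m hnm ih =>
    obtain ⟨T, hT⟩ := ih
    exact ⟨_, (hT.map ⟨(· + 1), add_left_injective 1⟩).insert (by omega) (a := 0) (by simp)⟩

theorem sumElim {H : SimpleGraph W} {T : W → Finset ℕ} (hS : IsJohnsonLabeling G n S)
    (hT : IsJohnsonLabeling H n T) (hn : 2 ≤ n) (hST : ∀ v w, Disjoint (S v) (T w)) :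
    IsJohnsonLabeling (G ⊕g H) n (Sum.elim S T) := by
  have ne_of_disjoint {s t : Finset ℕ} (hs : #s = n) (hst : Disjoint s t) : s ≠ t := by
    rintro rfl
    rw [disjoint_self_iff_empty] at hst
    simp [hst] at hs
    omega
  have card_inter_ne {s t : Finset ℕ} (hst : Disjoint s t) : #(s ∩ t) ≠ n - 1 := by
    rw [disjoint_iff_inter_eq_empty.1 hst, card_empty]
    omega
  refine ⟨?_, ?_, ?_⟩
  · rintro (v | w) (v' | w') h
    · exact congrArg _ (hS.injective h)
    · exact absurd h (ne_of_disjoint (hS.card_eq v) (hST v w'))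
    · exact absurd h.symm (ne_of_disjoint (hS.card_eq v') (hST v' w))
    · exact congrArg _ (hT.injective h)
  · rintro (v | w)
    · exact hS.card_eq v
    · exact hT.card_eq w
  · rintro (v | w) (v' | w') h
    · exact hS.adj_iff v v' (fun e => h (congrArg _ e))
    · simpa using card_inter_ne (hST v w')
    · simpa [inter_comm] using card_inter_ne (hST v' w)
    · exact hT.adj_iff w w' (fun e => h (congrArg _ e))

end IsJohnsonLabeling

theorem IsJIS.of_embedding {V W : Type*} [Fintype V] [Fintype W] {G : SimpleGraph V}
    {G' : SimpleGraph W} (hG : IsJIS G) (f : G' ↪g G) : IsJIS G' := by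
  obtain ⟨n, hn, S, hS⟩ := (isJIS_iff_exists_isJohnsonLabeling G).1 hG
  exact (isJIS_iff_exists_isJohnsonLabeling G').2 ⟨n, hn, _, hS.comp f⟩

/-- the disjoint union `G ⊕ H` of two finite simple graphs is JIS
if and only if both `G` and `H` are JIS. -/
theorem sum_isJIS_iff {α β : Type*} [Fintype α] [Fintype β]
    (G : SimpleGraph α) (H : SimpleGraph β) :
    IsJIS (G ⊕g H) ↔ IsJIS G ∧ IsJIS H := by
  refine ⟨fun h => ⟨h.of_embedding Embedding.sumInl, h.of_embedding Embedding.sumInr⟩, ?_⟩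
  simp only [isJIS_iff_exists_isJohnsonLabeling]
  rintro ⟨⟨n, hn, S, hS⟩, ⟨m, hm, T, hT⟩⟩
  set N := max n m + 1
  obtain ⟨S', hS'⟩ := hS.exists_of_le hn (m := N) (by omega)
  obtain ⟨T', hT'⟩ := hT.exists_of_le hm (m := N) (by omega)
  let even : ℕ ↪ ℕ := ⟨(2 * ·), fun _ _ h => by simp only at h; omega⟩
  let odd : ℕ ↪ ℕ := ⟨(2 * · + 1), fun _ _ h => by simp only at h; omega⟩
  have hdisj : ∀ s t : Finset ℕ, Disjoint (s.map even) (t.map odd) := by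
    simp only [Finset.disjoint_left, mem_map]
    rintro s t _ ⟨x, -, rfl⟩ ⟨y, -, h⟩
    change 2 * y + 1 = 2 * x at h
    omega
  exact ⟨N, by omega, _, (hS'.map even).sumElim (hT'.map odd) (by omega) fun _ _ => hdisj _ _⟩
end

section
/- The complete bipartite graph K_{2,3} is not JIS. -/
namespace Finset

variable {α : Type*} [DecidableEq α] {n : ℕ} {A B T : Finset α}

theorem card_inter_add_two_le_of_ne (hA : #A = n) (hB : #B = n) (hne : A ≠ B)
    (h : #(A ∩ B) ≠ n - 1) : #(A ∩ B) + 2 ≤ n := by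
  have hlt : #(A ∩ B) < n := by
    refine (hA ▸ card_le_card inter_subset_left).lt_of_ne fun heq => hne ?_
    have hAB : A ⊆ B := inter_eq_left.mp (eq_of_subset_of_card_le inter_subset_left (by omega))
    exact eq_of_subset_of_card_le hAB (by omega)
  omega

theorem sub_two_le_card_inter_inter (hT : #T = n) (hTA : #(T ∩ A) = n - 1)
    (hTB : #(T ∩ B) = n - 1) : n - 2 ≤ #(T ∩ (A ∩ B)) := by
  have hunion : #(T ∩ A ∪ T ∩ B) ≤ n :=
    hT ▸ card_le_card (union_subset inter_subset_left inter_subset_left)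
  have := card_union_add_card_inter (T ∩ A) (T ∩ B)
  rw [← inter_inter_distrib_left] at this
  omega

theorem inter_subset_and_card_of_card_inter_eq_sub_one (hT : #T = n)
    (hAB : #(A ∩ B) + 2 ≤ n) (hTA : #(T ∩ A) = n - 1) (hTB : #(T ∩ B) = n - 1) :
    A ∩ B ⊆ T ∧ #(A ∩ B) + 2 = n := by
  have hlow := sub_two_le_card_inter_inter hT hTA hTB
  have hle : #(T ∩ (A ∩ B)) ≤ #(A ∩ B) := card_le_card inter_subset_right
  have heq : T ∩ (A ∩ B) = A ∩ B := eq_of_subset_of_card_le inter_subset_right (by omega)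
  exact ⟨inter_eq_right.mp heq, by omega⟩

theorem card_le_two_of_common_neighbours {ι : Type*} [Fintype ι] {T : ι → Finset α}
    (hA : #A = n) (hT : ∀ i, #(T i) = n) (hAB : #(A ∩ B) + 2 ≤ n)
    (hTA : ∀ i, #(T i ∩ A) = n - 1) (hTB : ∀ i, #(T i ∩ B) = n - 1)
    (hTT : Pairwise fun i j => #(T i ∩ T j) + 2 ≤ n) : Fintype.card ι ≤ 2 := by
  rcases isEmpty_or_nonempty ι with _ | ⟨⟨i₀⟩⟩
  · simp
  have hcommon i := inter_subset_and_card_of_card_inter_eq_sub_one (hT i) hAB (hTA i) (hTB i)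
  have hAB_card : #(A ∩ B) + 2 = n := (hcommon i₀).2
  have hnonempty i : ((T i ∩ A) \ B).Nonempty := nonempty_iff_ne_empty.2 fun hempty => by
    have := card_le_card (subset_inter inter_subset_right (sdiff_eq_empty_iff_subset.1 hempty))
    have := hTA i
    omega
  have hdisjoint : ((univ : Finset ι) : Set ι).PairwiseDisjoint fun i => (T i ∩ A) \ B := by
    intro i _ j _ hij
    have hTij : T i ∩ T j = A ∩ B :=
      (eq_of_subset_of_card_le (subset_inter (hcommon i).1 (hcommon j).1) (by
        have := hTT hij; omega)).symm
    refine disjoint_left.2 fun x hxi hxj => (mem_sdiff.1 hxi).2 ?_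
    have : x ∈ T i ∩ T j :=
      mem_inter.2 ⟨(mem_inter.1 (mem_sdiff.1 hxi).1).1, (mem_inter.1 (mem_sdiff.1 hxj).1).1⟩
    exact (mem_inter.1 (hTij ▸ this)).2
  calc Fintype.card ι
      ≤ #(univ.biUnion fun i => (T i ∩ A) \ B) :=
        card_le_card_biUnion hdisjoint fun i _ => hnonempty i
    _ ≤ #(A \ B) :=
        card_le_card (biUnion_subset.2 fun _ _ => sdiff_subset_sdiff inter_subset_right le_rfl)
    _ = 2 := by rw [card_sdiff, inter_comm]; omega

end Finset

open Finset in
theorem card_le_two_of_isJIS_completeBipartiteGraph {ι : Type*} [Fintype ι]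
    (h : IsJIS (completeBipartiteGraph (Fin 2) ι)) : Fintype.card ι ≤ 2 := by
  obtain ⟨n, -, S, hinj, hcard, hadj⟩ := h
  have adj {v w} (h : (completeBipartiteGraph (Fin 2) ι).Adj v w) : #(S v ∩ S w) = n - 1 :=
    (hadj v w h.ne).1 h
  have nonadj {v w} (hvw : v ≠ w) (h : ¬ (completeBipartiteGraph (Fin 2) ι).Adj v w) :
      #(S v ∩ S w) + 2 ≤ n :=
    card_inter_add_two_le_of_ne (hcard v) (hcard w) (hinj.ne hvw) (mt (hadj v w hvw).2 h)
  exact card_le_two_of_common_neighbours (A := S (.inl 0)) (B := S (.inl 1)) (T := S ∘ .inr)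
    (hcard _) (fun _ => hcard _) (nonadj (by simp) (by simp)) (fun _ => adj (by simp))
    (fun _ => adj (by simp)) fun i j hij => nonadj (by simpa using hij) (by simp)

/-- the complete bipartite graph `K_{2,3}` is not JIS. -/
theorem completeBipartite_two_three_not_isJIS :
    ¬ IsJIS (completeBipartiteGraph (Fin 2) (Fin 3)) := fun h => by
  simpa using card_le_two_of_isJIS_completeBipartiteGraph h
end

section
/- The graph Δ_2 is not JIS. -/
/-- The graph `Δ i` (`i ≥ 2`): vertices `0, …, i+1` represent `v 1, …, v (i+2)`, and the
last vertex `i+2` represents `w`.  Edges: `v j — v (j+1)` for `1 ≤ j ≤ i+1`,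
`v j — v (j+2)` for `1 ≤ j ≤ i` (a chain of `i` consecutively adjacent triangles),
together with `w — v 1` and `w — v (i+2)`. -/
def DeltaGraph (i : ℕ) : SimpleGraph (Fin (i + 3)) :=
  SimpleGraph.fromRel (fun a b =>
    (b.val = a.val + 1 ∧ b.val ≤ i + 1) ∨
    (b.val = a.val + 2 ∧ b.val ≤ i + 1) ∨
    (a.val = i + 2 ∧ (b.val = 0 ∨ b.val = i + 1)))

/-!
For `n`-sets the Johnson distance `#(A \ B) = n - #(A ∩ B)` is of negative type: the matrix
`(#(S i ∩ S j))` is a Gram matrix of indicator vectors, so for weights `u` with `∑ u = 0` we get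
`∑ u i * u j * #(S i \ S j) = -∑ u i * u j * #(S i ∩ S j) ≤ 0`.  In a JIS representation adjacent
vertices are at Johnson distance `1`, and distinct non-adjacent vertices with a common neighbour
at distance `2`.  As `Δ₂` has diameter `2`, its graph distance would thus be of negative type,
but the weights `(-2, 1, 1, -2, 2)` give it the value `2`.
-/

open Finset

section JohnsonDistance

variable {α ι : Type*} [DecidableEq α]

theorem Finset.sum_mul_mul_card_inter_nonneg [Fintype ι] (S : ι → Finset α) (u : ι → ℤ) :
    0 ≤ ∑ i, ∑ j, u i * u j * #(S i ∩ S j) := by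
  classical
  set U := univ.biUnion S
  have hU : ∀ i, S i ⊆ U := fun i => subset_biUnion_of_mem S (mem_univ i)
  have hinter : ∀ i j, (#(S i ∩ S j) : ℤ) =
      ∑ x ∈ U, (if x ∈ S i then 1 else 0) * (if x ∈ S j then 1 else 0) := by
    intro i j
    simp only [mul_boole, ← ite_and, ← mem_inter, sum_boole, Nat.cast_inj]
    rw [filter_mem_eq_inter, inter_comm (S j),
      inter_eq_right.mpr fun x hx => hU i (mem_inter.1 hx).1]
  calc (0 : ℤ) ≤ ∑ x ∈ U, (∑ i, u i * if x ∈ S i then 1 else 0) ^ 2 :=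
        sum_nonneg fun x _ => sq_nonneg _
    _ = ∑ i, ∑ j, u i * u j * #(S i ∩ S j) := by
        simp_rw [hinter, sq, sum_mul_sum, mul_sum]
        rw [sum_comm]
        refine sum_congr rfl fun i _ => ?_
        rw [sum_comm]
        exact sum_congr rfl fun j _ => sum_congr rfl fun x _ => by ring

theorem Finset.sum_mul_mul_card_sdiff_nonpos [Fintype ι] {S : ι → Finset α} {n : ℕ}
    (hS : ∀ i, #(S i) = n) {u : ι → ℤ} (hu : ∑ i, u i = 0) :
    ∑ i, ∑ j, u i * u j * #(S i \ S j) ≤ 0 := by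
  have hsdiff : ∀ i j, (#(S i \ S j) : ℤ) = n - #(S i ∩ S j) := by
    intro i j
    rw [← hS i, ← card_sdiff_add_card_inter (S i) (S j)]
    push_cast
    ring
  have hsum : ∑ i, ∑ j, u i * u j * #(S i \ S j) =
      n * (∑ i, u i) * (∑ j, u j) - ∑ i, ∑ j, u i * u j * #(S i ∩ S j) := by
    simp_rw [hsdiff, mul_sub, sum_sub_distrib, mul_sum, sum_mul]
    congr 1
    exact sum_congr rfl fun i _ => sum_congr rfl fun j _ => by ring
  rw [hsum, hu]
  simpa using sum_mul_mul_card_inter_nonneg S u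

theorem Finset.card_sdiff_eq_zero_iff_of_card_eq {A B : Finset α} (h : #A = #B) :
    #(A \ B) = 0 ↔ A = B := by
  rw [card_eq_zero, sdiff_eq_empty_iff_subset]
  exact ⟨fun hAB => eq_of_subset_of_card_le hAB h.ge, fun hAB => hAB.subset⟩

theorem Finset.card_sdiff_le_card_sdiff_add_card_sdiff (A B C : Finset α) :
    #(A \ C) ≤ #(A \ B) + #(B \ C) :=
  (card_le_card (sdiff_triangle A B C)).trans (card_union_le _ _)

end JohnsonDistance

namespace SimpleGraph

structure IsJohnsonEmbedding {V α : Type*} [DecidableEq α] (G : SimpleGraph V) (n : ℕ)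
    (S : V → Finset α) : Prop where
  injective : Function.Injective S
  card_eq : ∀ v, #(S v) = n
  adj_iff : ∀ v w, v ≠ w → (G.Adj v w ↔ #(S v ∩ S w) = n - 1)

namespace IsJohnsonEmbedding

variable {V α : Type*} [DecidableEq α] {G : SimpleGraph V} {n : ℕ} {S : V → Finset α}

theorem card_sdiff_ne_zero (hS : G.IsJohnsonEmbedding n S) {v w : V} (hvw : v ≠ w) :
    #(S v \ S w) ≠ 0 := by
  rw [Ne, card_sdiff_eq_zero_iff_of_card_eq ((hS.card_eq v).trans (hS.card_eq w).symm)]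
  exact hS.injective.ne hvw

theorem adj_iff_card_sdiff_eq_one (hS : G.IsJohnsonEmbedding n S) {v w : V} (hvw : v ≠ w) :
    G.Adj v w ↔ #(S v \ S w) = 1 := by
  have hpos := hS.card_sdiff_ne_zero hvw
  have hsplit := card_sdiff_add_card_inter (S v) (S w)
  rw [hS.adj_iff v w hvw, hS.card_eq v] at *
  omega

theorem card_sdiff_eq_two_of_not_adj (hS : G.IsJohnsonEmbedding n S) {v w : V} (hvw : v ≠ w)
    (hnadj : ¬G.Adj v w) (hcommon : ∃ m, G.Adj v m ∧ G.Adj m w) : #(S v \ S w) = 2 := by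
  obtain ⟨m, hvm, hmw⟩ := hcommon
  have hpos := hS.card_sdiff_ne_zero hvw
  have hne_one : #(S v \ S w) ≠ 1 := (hS.adj_iff_card_sdiff_eq_one hvw).not.1 hnadj
  have hvm' := (hS.adj_iff_card_sdiff_eq_one hvm.ne).1 hvm
  have hmw' := (hS.adj_iff_card_sdiff_eq_one hmw.ne).1 hmw
  have := card_sdiff_le_card_sdiff_add_card_sdiff (S v) (S m) (S w)
  omega

end IsJohnsonEmbedding

end SimpleGraph

instance (i : ℕ) : DecidableRel (DeltaGraph i).Adj := fun a b =>
  decidable_of_iff' _ (SimpleGraph.fromRel_adj _ a b)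

def deltaTwoDist : Fin 5 → Fin 5 → ℕ :=
  ![![0, 1, 1, 2, 1], ![1, 0, 1, 1, 2], ![1, 1, 0, 1, 2], ![2, 1, 1, 0, 1], ![1, 2, 2, 1, 0]]

theorem SimpleGraph.IsJohnsonEmbedding.card_sdiff_eq_deltaTwoDist {α : Type*} [DecidableEq α]
    {n : ℕ} {S : Fin 5 → Finset α} (hS : (DeltaGraph 2).IsJohnsonEmbedding n S) (v w : Fin 5) :
    #(S v \ S w) = deltaTwoDist v w := by
  fin_cases v <;> fin_cases w <;> first
    | exact (hS.adj_iff_card_sdiff_eq_one (by decide)).1 (by decide)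
    | exact hS.card_sdiff_eq_two_of_not_adj (by decide) (by decide) (by decide)
    | simp [deltaTwoDist]

/-- the graph `Δ 2` is not JIS. -/
theorem delta_two_not_isJIS : ¬ IsJIS (DeltaGraph 2) := by
  rintro ⟨n, -, S, hinj, hcard, hadj⟩
  have hS : (DeltaGraph 2).IsJohnsonEmbedding n S := ⟨hinj, hcard, hadj⟩
  have hform := sum_mul_mul_card_sdiff_nonpos hS.card_eq (u := ![-2, 1, 1, -2, 2]) (by decide)
  simp only [hS.card_sdiff_eq_deltaTwoDist] at hform
  revert hform
  decide
end

section
/- The graph Δ_4 is not JIS. -/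
/-!
Replace every `S v` by `X v = S v₁ ∆ S v`. This preserves symmetric differences, so adjacency
becomes `#(X v ∆ X w) = 2`, while `X v₁ = ∅` and `#(S v) = #(S v₁)` becomes the balance
condition `2 * #(X v ∩ S v₁) = #(X v)`. The neighbours `v₂, v₃` of `v₁` become 2-sets `{p, s}`
and `{q, s}`, while `v₄`, `v₅` and (because of `w`) `v₆` become 4-sets; the triangles and
non-edges then force `X v₅ ∆ X v₆ = X v₂`. But if `X`, `Y` and `X ∆ Y` are all balanced then
`#(X ∩ Y)` is even, whereas `#(X v₅ ∩ X v₆) = 3`.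
-/

open scoped symmDiff

namespace Finset

variable {α : Type*} [DecidableEq α] {s t u : Finset α} {a b : α}

theorem card_symmDiff_add_two_mul_card_inter (s t : Finset α) :
    #(s ∆ t) + 2 * #(s ∩ t) = #s + #t := by
  have hsub : s ∩ t ⊆ s ∪ t := inter_subset_union
  have := card_union_add_card_inter s t
  have := card_le_card hsub
  rw [show s ∆ t = (s ∪ t) \ (s ∩ t) from symmDiff_eq_sup_sdiff_inf s t, card_sdiff_of_subset hsub]
  omega

theorem card_inter_eq_sub_one_iff_card_symmDiff_eq_two {n : ℕ} (hn : 0 < n) (hs : #s = n)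
    (ht : #t = n) : #(s ∩ t) = n - 1 ↔ #(s ∆ t) = 2 := by
  have := card_symmDiff_add_two_mul_card_inter s t
  omega

theorem symmDiff_symmDiff_symmDiff_cancel_left (u s t : Finset α) :
    (u ∆ s) ∆ (u ∆ t) = s ∆ t := by
  rw [symmDiff_symmDiff_symmDiff_comm, symmDiff_self, bot_symmDiff]

theorem two_mul_card_symmDiff_inter_left (h : #s = #t) :
    2 * #((t ∆ s) ∩ t) = #(t ∆ s) := by
  have hts : (t ∆ s) ∩ t = t \ s := by
    ext x
    simp only [mem_inter, mem_symmDiff, mem_sdiff]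
    tauto
  have := card_symmDiff_add_two_mul_card_inter t s
  have := card_sdiff_add_card_inter t s
  rw [hts]
  omega

theorem card_symmDiff_of_subset (h : t ⊆ s) : #(s ∆ t) = #s - #t := by
  rw [symmDiff_of_ge h, card_sdiff_of_subset h]

theorem card_eq_four_and_subset_of_card_symmDiff_eq_two (ht : #t = 2) (h : #(s ∆ t) = 2)
    (hs₀ : s ≠ ∅) (hs₂ : #s ≠ 2) : #s = 4 ∧ t ⊆ s := by
  have := card_pos.2 (nonempty_iff_ne_empty.2 hs₀)
  have := card_symmDiff_add_two_mul_card_inter s t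
  have := card_le_card (inter_subset_right (s₁ := s) (s₂ := t))
  exact ⟨by omega, inter_eq_right.1 (eq_of_subset_of_card_le inter_subset_right (by omega))⟩

theorem exists_eq_pair_of_card_symmDiff_eq_two (hs : #s = 2) (ht : #t = 2)
    (h : #(s ∆ t) = 2) : ∃ a b, a ∉ t ∧ b ∈ t ∧ s = {a, b} := by
  have := card_symmDiff_add_two_mul_card_inter s t
  have := card_sdiff_add_card_inter s t
  obtain ⟨a, ha⟩ := card_eq_one.1 (show #(s \ t) = 1 by omega)
  obtain ⟨b, hb⟩ := card_eq_one.1 (show #(s ∩ t) = 1 by omega)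
  refine ⟨a, b, (mem_sdiff.1 (ha ▸ mem_singleton_self a)).2,
    mem_of_mem_inter_right (hb ▸ mem_singleton_self b), ?_⟩
  rw [← sdiff_union_inter s t, ha, hb, insert_eq]

theorem erase_subset_of_card_symmDiff_eq_two (hst : #s = #t) (h : #(s ∆ t) = 2)
    (ha : a ∈ s) (ha' : a ∉ t) : s.erase a ⊆ t := by
  have := card_symmDiff_add_two_mul_card_inter s t
  have := card_sdiff_add_card_inter s t
  obtain ⟨c, hc⟩ := card_eq_one.1 (show #(s \ t) = 1 by omega)
  intro x hx
  by_contra hxt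
  have hx' : x ∈ s \ t := mem_sdiff.2 ⟨mem_of_mem_erase hx, hxt⟩
  have ha'' : a ∈ s \ t := mem_sdiff.2 ⟨ha, ha'⟩
  rw [hc, mem_singleton] at hx' ha''
  exact ne_of_mem_erase hx (hx'.trans ha''.symm)

theorem symmDiff_eq_pair (h : #(s ∆ t) = 2) (ha : a ∈ s) (ha' : a ∉ t) (hb : b ∈ t)
    (hb' : b ∉ s) : s ∆ t = {a, b} := by
  have hab : a ≠ b := ne_of_mem_of_not_mem ha hb'
  refine (eq_of_subset_of_card_le ?_ (by rw [h, card_pair hab])).symm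
  simp [insert_subset_iff, mem_symmDiff, *]

theorem even_card_inter_of_two_mul_card_inter_eq (hs : 2 * #(s ∩ u) = #s)
    (ht : 2 * #(t ∩ u) = #t) (hst : 2 * #((s ∆ t) ∩ u) = #(s ∆ t)) : Even #(s ∩ t) := by
  have hu := card_symmDiff_add_two_mul_card_inter (s ∩ u) (t ∩ u)
  rw [← show (s ∆ t) ∩ u = (s ∩ u) ∆ (t ∩ u) from inf_symmDiff_distrib_right s t u,
    show s ∩ u ∩ (t ∩ u) = s ∩ t ∩ u by ext; simp only [mem_inter]; tauto] at hu
  have := card_symmDiff_add_two_mul_card_inter s t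
  exact ⟨#(s ∩ t ∩ u), by omega⟩

end Finset

open Finset

instance inst_s13 (i : ℕ) : DecidableRel (DeltaGraph i).Adj := fun _ _ =>
  decidable_of_iff' _ (SimpleGraph.fromRel_adj _ _ _)

theorem deltaGraph_four_no_balanced_symmDiff_rep {α : Type*} [DecidableEq α]
    (X : Fin 7 → Finset α) (u : Finset α) (h₀ : X 0 = ∅) (hX : Function.Injective X)
    (hadj : ∀ v w, v ≠ w → ((DeltaGraph 4).Adj v w ↔ #(X v ∆ X w) = 2))
    (hbal : ∀ v, 2 * #(X v ∩ u) = #(X v)) : False := by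
  have adj : ∀ v w, (DeltaGraph 4).Adj v w → #(X v ∆ X w) = 2 :=
    fun v w h => (hadj v w h.ne).1 h
  have symmDiff_X₀ : ∀ v, X 0 ∆ X v = X v := fun v => by
    rw [h₀, ← bot_eq_empty, bot_symmDiff]
  have card_nbr : ∀ v, (DeltaGraph 4).Adj 0 v → #(X v) = 2 :=
    fun v h => symmDiff_X₀ v ▸ adj 0 v h
  have card_eq_four : ∀ v w, v ≠ 0 ∧ ¬ (DeltaGraph 4).Adj 0 v ∧ (DeltaGraph 4).Adj 0 w ∧
      (DeltaGraph 4).Adj v w → #(X v) = 4 ∧ X w ⊆ X v :=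
    fun v w ⟨hv, h0v, h0w, hvw⟩ => card_eq_four_and_subset_of_card_symmDiff_eq_two
      (card_nbr w h0w) (adj v w hvw) (fun h => hv (hX (h.trans h₀.symm)))
      (fun h => h0v ((hadj 0 v hv.symm).2 (by rw [symmDiff_X₀, h])))
  have not_subset : ∀ v w, v ≠ w ∧ ¬ (DeltaGraph 4).Adj v w ∧ (DeltaGraph 4).Adj 0 w →
      #(X v) = 4 → ¬ X w ⊆ X v :=
    fun v w ⟨hvw, hnvw, h0w⟩ hv hsub => hnvw ((hadj v w hvw).2
      (by rw [card_symmDiff_of_subset hsub, hv, card_nbr w h0w]))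
  obtain ⟨p, s, hp₂, hs₂, hX₁⟩ := exists_eq_pair_of_card_symmDiff_eq_two
    (card_nbr 1 (by decide)) (card_nbr 2 (by decide)) (adj 1 2 (by decide))
  obtain ⟨hX₃, h₁₃⟩ := card_eq_four 3 1 (by decide)
  obtain ⟨-, h₂₃⟩ := card_eq_four 3 2 (by decide)
  obtain ⟨hX₄, h₂₄⟩ := card_eq_four 4 2 (by decide)
  obtain ⟨hX₅, -⟩ := card_eq_four 5 6 (by decide)
  have hs₄ : s ∈ X 4 := h₂₄ hs₂
  have hp₄ : p ∉ X 4 := fun hp₄ =>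
    not_subset 4 1 (by decide) hX₄ (by simp [hX₁, insert_subset_iff, hp₄, hs₄])
  have hp₅ : p ∈ X 5 := by
    by_contra hp₅
    refine not_subset 5 2 (by decide) hX₅ fun x hx => ?_
    exact erase_subset_of_card_symmDiff_eq_two (hX₃.trans hX₅.symm) (adj 3 5 (by decide))
      (h₁₃ (by simp [hX₁])) hp₅ (mem_erase.2 ⟨ne_of_mem_of_not_mem hx hp₂, h₂₃ hx⟩)
  have hs₅ : s ∉ X 5 := fun hs₅ =>
    not_subset 5 1 (by decide) hX₅ (by simp [hX₁, insert_subset_iff, hp₅, hs₅])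
  have h₄₅ : X 4 ∆ X 5 = X 1 := by
    rw [symmDiff_eq_pair (adj 4 5 (by decide)) hs₄ hs₅ hp₅ hp₄, hX₁, pair_comm]
  have hcard₄₅ : #(X 4 ∩ X 5) = 4 - 1 :=
    (card_inter_eq_sub_one_iff_card_symmDiff_eq_two (by norm_num) hX₄ hX₅).2
      (adj 4 5 (by decide))
  have heven₄₅ := even_card_inter_of_two_mul_card_inter_eq (hbal 4) (hbal 5) (h₄₅ ▸ hbal 1)
  rw [hcard₄₅] at heven₄₅
  exact absurd heven₄₅ (by decide)

/-- the graph `Δ 4` is not JIS. -/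
theorem delta_four_not_isJIS : ¬ IsJIS (DeltaGraph 4) := by
  rintro ⟨n, hn, S, hS, hcard, hadj⟩
  refine deltaGraph_four_no_balanced_symmDiff_rep (fun v => S 0 ∆ S v) (S 0)
    (symmDiff_self _) ((symmDiff_right_injective _).comp hS) (fun v w hvw => ?_)
    (fun v => two_mul_card_symmDiff_inter_left ((hcard v).trans (hcard 0).symm))
  rw [hadj v w hvw, symmDiff_symmDiff_symmDiff_cancel_left,
    card_inter_eq_sub_one_iff_card_symmDiff_eq_two hn (hcard v) (hcard w)]
end

section
/- Let G be a JIS graph with n vertices (n ≥ 1). Then there exists a positive integer m ≤ n and an injective assignment v ↦ S_v of m-element subsets of {1, 2, …, 2n} to the vertices of G such that two distinct vertices v and w are adjacent if and only if |S_v ∩ S_w| = m − 1; that is, G is isomorphic to an induced subgraph of the Johnson graph J(m, 2n). -/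
open Finset

section

variable {V α β ι : Type*}

/-- For sets of equal size, `card_inter_lt` is injectivity. -/
structure IsJohnsonEmbedding_s16 [DecidableEq α] (G : SimpleGraph V) (m : ℕ) (S : V → Finset α) :
    Prop where
  card_eq : ∀ v, #(S v) = m
  card_inter_lt : ∀ ⦃u w⦄, u ≠ w → #(S u ∩ S w) < m
  adj_iff : ∀ ⦃u w⦄, u ≠ w → (G.Adj u w ↔ #(S u ∩ S w) = m - 1)

namespace IsJohnsonEmbedding_s16

variable [DecidableEq α] {G : SimpleGraph V} {m : ℕ} {S : V → Finset α}

theorem injective (hS : IsJohnsonEmbedding_s16 G m S) : Function.Injective S := by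
  intro u w huw
  by_contra hne
  have := hS.card_inter_lt hne
  rw [huw, inter_self, hS.card_eq] at this
  exact this.false

theorem card_sdiff_le_one (hS : IsJohnsonEmbedding_s16 G m S) {a b : V} (hab : G.Adj a b) :
    #(S a \ S b) ≤ 1 := by
  rw [card_sdiff, inter_comm, (hS.adj_iff hab.ne).1 hab, hS.card_eq]
  omega

theorem image [DecidableEq β] (hS : IsJohnsonEmbedding_s16 G m S) {f : α → β}
    (hf : Set.InjOn f (⋃ v, (S v : Set α))) : IsJohnsonEmbedding_s16 G m fun v => (S v).image f := by
  have hsub : ∀ v, (S v : Set α) ⊆ ⋃ v, (S v : Set α) :=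
    Set.subset_iUnion fun v => (S v : Set α)
  have hinj : ∀ v, Set.InjOn f (S v) := fun v => hf.mono (hsub v)
  have hcard : ∀ u w, #((S u).image f ∩ (S w).image f) = #(S u ∩ S w) := fun u w => by
    rw [← image_inter_of_injOn _ _ (hf.mono (Set.union_subset (hsub u) (hsub w))),
      card_image_of_injOn ((hinj u).mono (coe_subset.2 inter_subset_left))]
  refine ⟨fun v => ?_, fun u w huw => ?_, fun u w huw => ?_⟩
  · rw [card_image_of_injOn (hinj v), hS.card_eq]
  · rw [hcard]; exact hS.card_inter_lt huw
  · rw [hcard]; exact hS.adj_iff huw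

theorem of_subsingleton [Subsingleton V] (s : Finset α) :
    IsJohnsonEmbedding_s16 G #s fun _ => s :=
  ⟨fun _ => rfl, fun u w huw => absurd (Subsingleton.elim u w) huw,
    fun u w huw => absurd (Subsingleton.elim u w) huw⟩

end IsJohnsonEmbedding_s16

theorem IsJohnsonEmbedding_s16.exists_subset_Icc [Fintype V] [DecidableEq α] {G : SimpleGraph V}
    {m : ℕ} {S : V → Finset α} (hS : IsJohnsonEmbedding_s16 G m S) {n : ℕ}
    (hn : #(univ.biUnion S) ≤ n) :
    ∃ S' : V → Finset ℕ, IsJohnsonEmbedding_s16 G m S' ∧ ∀ v, S' v ⊆ Icc 1 n := by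
  set U := univ.biUnion S
  obtain ⟨g, hg⟩ := Function.Embedding.exists_of_card_le_finset (α := U) (s := Icc 1 n)
    (by simpa using hn)
  let f : α → ℕ := fun x => if h : x ∈ U then g ⟨x, h⟩ else 0
  have hfU : ∀ x (hx : x ∈ U), f x = g ⟨x, hx⟩ := fun x hx => dif_pos hx
  have hSU : ∀ v, S v ⊆ U := fun v => subset_biUnion_of_mem S (mem_univ v)
  have hinj : Set.InjOn f U := fun x hx y hy hxy => by
    rw [hfU x hx, hfU y hy] at hxy
    exact congrArg Subtype.val (g.injective hxy)
  refine ⟨fun v => (S v).image f,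
    hS.image (hinj.mono (Set.iUnion_subset fun v => coe_subset.2 (hSU v))), fun v x hx => ?_⟩
  obtain ⟨y, hy, rfl⟩ := mem_image.1 hx
  rw [hfU y (hSU v hy)]
  exact hg ⟨_, rfl⟩

theorem IsJIS.exists_isJohnsonEmbedding [Fintype V] {G : SimpleGraph V} (hG : IsJIS G) :
    ∃ N, ∃ A : V → Finset ℕ, IsJohnsonEmbedding_s16 G N A := by
  obtain ⟨N, -, A, hinj, hcard, hadj⟩ := hG
  refine ⟨N, A, hcard, fun u w huw => ?_, hadj⟩
  refine (card_lt_card ⟨inter_subset_left, fun hsub => huw (hinj ?_)⟩).trans_eq (hcard u)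
  exact eq_of_subset_of_card_le (hsub.trans inter_subset_right) (by rw [hcard, hcard])

theorem SimpleGraph.induction_on_finset_of_adj [DecidableEq V] {G : SimpleGraph V}
    {P : Finset V → Prop} {v : V} {t : Finset V} (hv : v ∈ t)
    (hreach : ∀ w ∈ t, G.Reachable v w) (hclosed : ∀ a ∈ t, ∀ b, G.Adj a b → b ∈ t)
    (hsingleton : P {v}) (hinsert : ∀ s a b, a ∈ s → b ∉ s → G.Adj a b → P s → P (insert b s)) :
    P t := by
  have hvt : {v} ⊆ t := singleton_subset_iff.2 hv
  refine strongDownwardInduction (p := fun s => s ⊆ t → v ∈ s → P s → P t) (n := #t)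
    (fun s ih _ hst hvs hPs => ?_) {v} (card_le_card hvt) hvt (mem_singleton_self v) hsingleton
  obtain rfl | hssub := hst.eq_or_ssubset
  · exact hPs
  obtain ⟨w, hwt, hws⟩ := exists_of_ssubset hssub
  obtain ⟨p⟩ := hreach w hwt
  obtain ⟨d, -, ha, hb⟩ := p.exists_boundary_dart s hvs hws
  have hsub : insert d.snd s ⊆ t := insert_subset (hclosed _ (hst ha) _ d.adj) hst
  exact ih (card_le_card hsub) (ssubset_insert hb) hsub (mem_insert_of_mem hvs)
    (hinsert s _ _ ha hb d.adj hPs)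

theorem exists_common_subset_of_card_sdiff_le_one [DecidableEq α] {G : SimpleGraph V}
    {A : V → Finset α} {N : ℕ} (hcard : ∀ v, #(A v) = N)
    (hadj : ∀ ⦃a b⦄, G.Adj a b → #(A a \ A b) ≤ 1) {v : V} {t : Finset V} (hv : v ∈ t)
    (hreach : ∀ w ∈ t, G.Reachable v w) (hclosed : ∀ a ∈ t, ∀ b, G.Adj a b → b ∈ t) :
    ∃ K, (∀ w ∈ t, K ⊆ A w) ∧ N + 1 ≤ #K + #t ∧ #(t.biUnion A) + 1 ≤ N + #t := by
  classical
  refine SimpleGraph.induction_on_finset_of_adj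
    (P := fun s => ∃ K, (∀ w ∈ s, K ⊆ A w) ∧ N + 1 ≤ #K + #s ∧ #(s.biUnion A) + 1 ≤ N + #s)
    hv hreach hclosed ⟨A v, by simp, by simp [hcard], by simp [hcard]⟩ ?_
  rintro s a b ha hb hab ⟨K, hKsub, hK, hU⟩
  refine ⟨K ∩ A b, fun w hw => ?_, ?_, ?_⟩
  · obtain rfl | hw := mem_insert.1 hw
    · exact inter_subset_right
    · exact inter_subset_left.trans (hKsub w hw)
  · have hlost : #(K \ A b) ≤ 1 :=
      (card_le_card (sdiff_subset_sdiff (hKsub a ha) subset_rfl)).trans (hadj hab)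
    have := card_inter_add_card_sdiff K (A b)
    rw [card_insert_of_notMem hb]
    omega
  · have hnew : #(A b \ s.biUnion A) ≤ 1 :=
      (card_le_card (sdiff_subset_sdiff subset_rfl (subset_biUnion_of_mem A ha))).trans
        (hadj hab.symm)
    have := card_sdiff_add_card (A b) (s.biUnion A)
    rw [biUnion_insert, card_insert_of_notMem hb]
    omega

theorem SimpleGraph.exists_common_subset_of_connectedComponent [DecidableEq α] [Fintype V]
    {G : SimpleGraph V} [DecidableEq G.ConnectedComponent] {A : V → Finset α} {N : ℕ}
    (hcard : ∀ v, #(A v) = N) (hadj : ∀ ⦃a b⦄, G.Adj a b → #(A a \ A b) ≤ 1) :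
    ∃ K : G.ConnectedComponent → Finset α, ∀ v,
      K (G.connectedComponentMk v) ⊆ A v ∧
      N + 1 ≤ #(K (G.connectedComponentMk v)) +
        #({w | G.connectedComponentMk w = G.connectedComponentMk v} : Finset V) ∧
      #(({w | G.connectedComponentMk w = G.connectedComponentMk v} : Finset V).biUnion A) + 1 ≤
        N + #({w | G.connectedComponentMk w = G.connectedComponentMk v} : Finset V) := by
  have : ∀ c : G.ConnectedComponent, ∃ K, ∀ v, G.connectedComponentMk v = c →
      K ⊆ A v ∧ N + 1 ≤ #K + #({w | G.connectedComponentMk w = c} : Finset V) ∧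
      #(({w | G.connectedComponentMk w = c} : Finset V).biUnion A) + 1 ≤
        N + #({w | G.connectedComponentMk w = c} : Finset V) := by
    refine ConnectedComponent.ind fun v => ?_
    obtain ⟨K, hKsub, hK, hU⟩ := exists_common_subset_of_card_sdiff_le_one hcard hadj (v := v)
      (t := {w | G.connectedComponentMk w = G.connectedComponentMk v}) (by simp)
      (fun w hw => ConnectedComponent.eq.1 (mem_filter.1 hw).2.symm)
      (fun a ha b hab => by
        simpa [← ConnectedComponent.connectedComponentMk_eq_of_adj hab] using ha)
    exact ⟨K, fun w hw => ⟨hKsub w (by simp [hw]), hK, hU⟩⟩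
  choose K hK using this
  exact ⟨K, fun v => hK _ v rfl⟩

theorem singleton_product_union_inter_subset [DecidableEq ι] [DecidableEq β] {i j i₀ : ι}
    {X Y Z : Finset β} {F F' : Finset (ι × β)} (hij : i ≠ j) (hi : i ≠ i₀)
    (hF : F ⊆ {i₀} ×ˢ Y) : ({i} ×ˢ X ∪ F') ∩ ({j} ×ˢ Z ∪ F) ⊆ F' := by
  intro x hx
  simp only [mem_inter, mem_union, mem_product, mem_singleton] at hx
  obtain ⟨⟨hxi, -⟩ | hxF', ⟨hxj, -⟩ | hxF⟩ := hx
  · exact absurd (hxi.symm.trans hxj) hij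
  · exact absurd (hxi.symm.trans (mem_singleton.1 (mem_product.1 (hF hxF)).1)) hi
  all_goals exact hxF'

theorem IsJohnsonEmbedding_s16.of_pieces [DecidableEq ι] [DecidableEq β] {G : SimpleGraph V}
    {comp : V → ι} {k : ι → ℕ} {T : V → Finset β} {v₀ : V} {F : ι → Finset (ι × β)}
    (hcomp : ∀ ⦃u w⦄, G.Adj u w → comp u = comp w) (hcard : ∀ v, #(T v) = k (comp v))
    (hlt : ∀ ⦃u w⦄, u ≠ w → comp u = comp w → #(T u ∩ T w) < k (comp u))
    (hadj : ∀ ⦃u w⦄, u ≠ w → comp u = comp w → (G.Adj u w ↔ #(T u ∩ T w) = k (comp u) - 1))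
    (hk : ∀ v, 2 ≤ k (comp v)) (hmax : ∀ v, k (comp v) ≤ k (comp v₀))
    (hF : ∀ i, F i ⊆ {comp v₀} ×ˢ T v₀) (hFcard : ∀ i, #(F i) = k (comp v₀) - k i) :
    IsJohnsonEmbedding_s16 G (k (comp v₀)) fun v => {comp v} ×ˢ T v ∪ F (comp v) := by
  set M := k (comp v₀)
  set S := fun v => {comp v} ×ˢ T v ∪ F (comp v)
  have hF₀ : F (comp v₀) = ∅ := card_eq_zero.1 (by rw [hFcard, Nat.sub_self])
  have hdisj : ∀ v (Y : Finset β), Disjoint ({comp v} ×ˢ Y) (F (comp v)) := fun v Y => by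
    by_cases h : comp v = comp v₀
    · rw [h, hF₀]; exact disjoint_empty_right _
    · exact (disjoint_product.2 (Or.inl (disjoint_singleton.2 h))).mono_right (hF _)
  have hcardS : ∀ v, #(S v) = M := fun v => by
    rw [card_union_of_disjoint (hdisj v _), card_product, card_singleton, one_mul, hcard,
      hFcard]
    exact Nat.add_sub_cancel' (hmax v)
  have hsame : ∀ u w, comp u = comp w → #(S u ∩ S w) = #(T u ∩ T w) + (M - k (comp u)) := by
    intro u w h
    have : S u ∩ S w = {comp u} ×ˢ (T u ∩ T w) ∪ F (comp u) := by
      simp only [S, h, ← inter_union_distrib_right, product_inter_product, inter_self]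
    rw [this, card_union_of_disjoint (hdisj u _), card_product, card_singleton, one_mul, hFcard]
  have hcross : ∀ u w, comp u ≠ comp w → #(S u ∩ S w) + 2 ≤ M := by
    intro u w huw
    wlog hu : comp u ≠ comp v₀ generalizing u w
    · rw [inter_comm]
      exact this w u (Ne.symm huw) (fun hw => huw ((not_not.1 hu).trans hw.symm))
    have : #(S u ∩ S w) ≤ #(F (comp u)) :=
      card_le_card (singleton_product_union_inter_subset huw hu (hF (comp w)))
    rw [hFcard] at this
    have := hk u
    have := hmax u
    omega
  refine ⟨hcardS, fun u w huw => ?_, fun u w huw => ?_⟩ <;> by_cases h : comp u = comp w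
  · have := hlt huw h
    have := hmax u
    rw [hsame u w h]
    omega
  · have := hcross u w h
    omega
  · have := hlt huw h
    have := hmax u
    rw [hadj huw h, hsame u w h]
    omega
  · have := hcross u w h
    exact iff_of_false (fun hadj => h (hcomp hadj)) (by omega)

theorem card_biUnion_singleton_product_le [Fintype V] [DecidableEq ι] [DecidableEq β]
    (comp : V → ι) (T : V → Finset β) {b : ℕ}
    (h : ∀ v, #(({w | comp w = comp v} : Finset V).biUnion T) ≤ b * #{w | comp w = comp v}) :
    #(univ.biUnion fun v => {comp v} ×ˢ T v) ≤ b * Fintype.card V := by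
  have hsub : (univ.biUnion fun v => {comp v} ×ˢ T v) ⊆
      (univ.image comp).biUnion fun i => {i} ×ˢ ({w | comp w = i} : Finset V).biUnion T := by
    intro x hx
    simp only [mem_biUnion, mem_univ, true_and, mem_product, mem_singleton, mem_image,
      mem_filter] at hx ⊢
    obtain ⟨v, hv, hx⟩ := hx
    exact ⟨comp v, ⟨v, rfl⟩, hv, v, rfl, hx⟩
  calc #(univ.biUnion fun v => {comp v} ×ˢ T v)
      ≤ ∑ i ∈ univ.image comp, #({i} ×ˢ ({w | comp w = i} : Finset V).biUnion T) :=
        (card_le_card hsub).trans card_biUnion_le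
    _ ≤ ∑ i ∈ univ.image comp, b * #{w | comp w = i} := by
        refine sum_le_sum fun i hi => ?_
        obtain ⟨v, -, rfl⟩ := mem_image.1 hi
        simpa using h v
    _ = b * Fintype.card V := by
        rw [← mul_sum, ← card_univ,
          card_eq_sum_card_fiberwise fun v _ => mem_image_of_mem comp (mem_univ v)]

section StripAndPad

variable [DecidableEq α] {N : ℕ} {K : Finset α}

/-- Padding to at least two points keeps vertices of different pieces non-adjacent once all
sets are topped up to a common size. -/
def stripAndPad (N : ℕ) (K X : Finset α) : Finset (α ⊕ ℕ) :=
  (X \ K).disjSum (range (2 - (N - #K)))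

theorem card_stripAndPad {X : Finset α} (hK : K ⊆ X) :
    #(stripAndPad N K X) = #X - #K + (2 - (N - #K)) := by
  rw [stripAndPad, card_disjSum, card_range, card_sdiff_of_subset hK]

theorem stripAndPad_inter (X Y : Finset α) :
    stripAndPad N K X ∩ stripAndPad N K Y = stripAndPad N K (X ∩ Y) := by
  ext (x | x) <;> simp [stripAndPad]
  tauto

theorem card_biUnion_stripAndPad_le {s : Finset V} {A : V → Finset α} (hKs : K ⊆ s.biUnion A)
    (hK : N + 1 ≤ #K + #s) (hs : #(s.biUnion A) + 1 ≤ N + #s) :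
    #(s.biUnion fun v => stripAndPad N K (A v)) ≤ 2 * #s := by
  have hsub : (s.biUnion fun v => stripAndPad N K (A v)) ⊆ stripAndPad N K (s.biUnion A) :=
    biUnion_subset.2 fun v hv =>
      disjSum_mono (sdiff_subset_sdiff (subset_biUnion_of_mem A hv) subset_rfl) subset_rfl
  have := card_le_card hKs
  have := card_le_card hsub
  rw [card_stripAndPad hKs] at this
  omega

theorem IsJohnsonEmbedding_s16.card_stripAndPad_inter {G : SimpleGraph V} {A : V → Finset α}
    (hA : IsJohnsonEmbedding_s16 G N A) {u w : V} (huw : u ≠ w) (hK : K ⊆ A u ∩ A w) :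
    #(stripAndPad N K (A u) ∩ stripAndPad N K (A w)) < max 2 (N - #K) ∧
      (G.Adj u w ↔ #(stripAndPad N K (A u) ∩ stripAndPad N K (A w)) = max 2 (N - #K) - 1) := by
  rw [stripAndPad_inter, card_stripAndPad hK, hA.adj_iff huw]
  have := hA.card_inter_lt huw
  have := card_le_card hK
  omega

end StripAndPad

theorem IsJohnsonEmbedding_s16.exists_of_common_subsets [Fintype V] [Nonempty V] [DecidableEq α]
    [DecidableEq ι] {G : SimpleGraph V} {N : ℕ} {A : V → Finset α}
    (hA : IsJohnsonEmbedding_s16 G N A) {comp : V → ι} (hcomp : ∀ ⦃u w⦄, G.Adj u w → comp u = comp w)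
    {K : ι → Finset α} (hKsub : ∀ v, K (comp v) ⊆ A v)
    (hK : ∀ v, N + 1 ≤ #(K (comp v)) + #({w | comp w = comp v} : Finset V))
    (hU : ∀ v, #(({w | comp w = comp v} : Finset V).biUnion A) + 1 ≤
      N + #({w | comp w = comp v} : Finset V)) :
    ∃ m, 2 ≤ m ∧ m ≤ max 2 (Fintype.card V - 1) ∧ ∃ S : V → Finset (ι × (α ⊕ ℕ)),
      IsJohnsonEmbedding_s16 G m S ∧ #(univ.biUnion S) ≤ 2 * Fintype.card V := by
  set T := fun v => stripAndPad N (K (comp v)) (A v)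
  have hcardT : ∀ v, #(T v) = max 2 (N - #(K (comp v))) := fun v => by
    have := card_le_card (hKsub v)
    rw [card_stripAndPad (hKsub v), hA.card_eq] at *
    omega
  have hpair : ∀ ⦃u w⦄, u ≠ w → comp u = comp w →
      #(T u ∩ T w) < max 2 (N - #(K (comp u))) ∧
        (G.Adj u w ↔ #(T u ∩ T w) = max 2 (N - #(K (comp u))) - 1) := fun u w huw h => by
    simp only [T, ← h]
    exact hA.card_stripAndPad_inter huw (subset_inter (hKsub u) (h ▸ hKsub w))
  obtain ⟨v₀, -, hmax⟩ :=
    exists_max_image univ (fun v => max 2 (N - #(K (comp v)))) univ_nonempty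
  choose F hF hFcard using fun i => exists_subset_card_eq (s := {comp v₀} ×ˢ T v₀)
    (n := max 2 (N - #(K (comp v₀))) - max 2 (N - #(K i)))
    (by rw [card_product, card_singleton, one_mul, hcardT]; exact Nat.sub_le _ _)
  refine ⟨_, le_max_left _ _, ?_, _, IsJohnsonEmbedding_s16.of_pieces
    (k := fun i => max 2 (N - #(K i))) hcomp hcardT (fun u w huw h => (hpair huw h).1)
    (fun u w huw h => (hpair huw h).2) (fun v => le_max_left _ _)
    (fun v => hmax v (mem_univ v)) hF hFcard, ?_⟩
  · have := hK v₀
    have := card_le_univ ({w | comp w = comp v₀} : Finset V)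
    omega
  refine (card_le_card fun x hx => ?_).trans (card_biUnion_singleton_product_le comp T
    fun v => ?_)
  · simp only [mem_biUnion, mem_univ, true_and, mem_union] at hx ⊢
    obtain ⟨v, hx | hx⟩ := hx
    exacts [⟨v, hx⟩, ⟨v₀, hF _ hx⟩]
  · have hT : ({w | comp w = comp v} : Finset V).biUnion T =
        ({w | comp w = comp v} : Finset V).biUnion fun w => stripAndPad N (K (comp v)) (A w) :=
      biUnion_congr rfl fun w hw => by simp only [T, (mem_filter.1 hw).2]
    rw [hT]
    exact card_biUnion_stripAndPad_le
      ((hKsub v).trans (subset_biUnion_of_mem A (mem_filter.2 ⟨mem_univ v, rfl⟩))) (hK v) (hU v)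

end

/-- every JIS graph of order `n ≥ 1` is, for some `m ≤ n`, isomorphic to an
induced subgraph of the Johnson graph `J(m, 2n)`, i.e. it can be realized by `m`-element
subsets of `{1, …, 2n}`. -/
theorem isJIS_realized_in_johnson {V : Type*} [Fintype V] (G : SimpleGraph V)
    (hG : IsJIS G) (hn : 1 ≤ Fintype.card V) :
    ∃ m : ℕ, 0 < m ∧ m ≤ Fintype.card V ∧
      ∃ S : V → Finset ℕ, Function.Injective S ∧
        (∀ v, S v ⊆ Finset.Icc 1 (2 * Fintype.card V)) ∧
        (∀ v, (S v).card = m) ∧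
        ∀ v w : V, v ≠ w → (G.Adj v w ↔ (S v ∩ S w).card = m - 1) := by
  classical
  suffices ∃ m, 0 < m ∧ m ≤ Fintype.card V ∧ ∃ S : V → Finset ℕ,
      IsJohnsonEmbedding_s16 G m S ∧ ∀ v, S v ⊆ Icc 1 (2 * Fintype.card V) by
    obtain ⟨m, hm, hmn, S, hS, hsub⟩ := this
    exact ⟨m, hm, hmn, S, hS.injective, hsub, hS.card_eq, fun v w h => hS.adj_iff h⟩
  obtain hV | hV : Fintype.card V = 1 ∨ 2 ≤ Fintype.card V := by omega
  · have := Fintype.card_le_one_iff_subsingleton.1 hV.le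
    exact ⟨1, one_pos, hn, _, IsJohnsonEmbedding_s16.of_subsingleton {1}, fun v => by simp; omega⟩
  have : Nonempty V := Fintype.card_pos_iff.1 hn
  obtain ⟨N, A, hA⟩ := hG.exists_isJohnsonEmbedding
  obtain ⟨K, hK⟩ := G.exists_common_subset_of_connectedComponent hA.card_eq
    fun a b => hA.card_sdiff_le_one
  obtain ⟨m, hm, hmn, S, hS, hSU⟩ := hA.exists_of_common_subsets
    (fun u w => SimpleGraph.ConnectedComponent.connectedComponentMk_eq_of_adj) (fun v => (hK v).1)
    (fun v => (hK v).2.1) (fun v => (hK v).2.2)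
  obtain ⟨S', hS', hsub⟩ := hS.exists_subset_Icc hSU
  exact ⟨m, by omega, by omega, S', hS', hsub⟩
end

section
/- Let G be a connected JIS graph with n vertices, where n ≥ 2. Then there exists a positive integer m ≤ n − 1 and an injective assignment v ↦ S_v of m-element subsets of {1, 2, …, 2n − 1} to the vertices of G such that two distinct vertices v and w are adjacent if and only if |S_v ∩ S_w| = m − 1; that is, G is isomorphic to an induced subgraph of the Johnson graph J(m, 2n − 1). -/
open Finset

section

variable {V α β : Type*}

namespace Finset

variable [DecidableEq V] [DecidableEq α] {S : V → Finset α} {A : Finset V} {v w : V}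

theorem card_sup_insert_le (hv : v ∈ A) :
    #((insert w A).sup S) ≤ #(S w \ S v) + #(A.sup S) := by
  rw [sup_insert]
  calc #(S w ∪ A.sup S) = #(S w \ A.sup S) + #(A.sup S) := (card_sdiff_add_card _ _).symm
    _ ≤ #(S w \ S v) + #(A.sup S) := by gcongr; exact le_sup hv

theorem card_inf'_le_card_inf'_insert (hv : v ∈ A) :
    #(A.inf' ⟨v, hv⟩ S) ≤ #((insert w A).inf' (insert_nonempty w A) S) + #(S v \ S w) := by
  rw [inf'_insert (H := ⟨v, hv⟩)]
  set X := A.inf' ⟨v, hv⟩ S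
  calc #X = #(X ∩ S w) + #(X \ S w) := (card_inter_add_card_sdiff _ _).symm
    _ ≤ #(S w ∩ X) + #(S v \ S w) := by
      rw [inter_comm]; gcongr; exact inf'_le S hv

end Finset

namespace SimpleGraph

def IsJohnsonRealization [DecidableEq α] (G : SimpleGraph V) (m : ℕ) (S : V → Finset α) :
    Prop :=
  Function.Injective S ∧ (∀ v, #(S v) = m) ∧
    ∀ v w, v ≠ w → (G.Adj v w ↔ #(S v ∩ S w) = m - 1)

theorem Connected.finset_induction [Fintype V] [DecidableEq V] {G : SimpleGraph V}
    (hG : G.Connected) {P : Finset V → Prop}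
    (step : ∀ A v w, v ∈ A → w ∉ A → G.Adj v w → P A → P (insert w A))
    {A : Finset V} (hA : A.Nonempty) (hPA : P A) : P univ := by
  by_cases hAuniv : A = univ
  · exact hAuniv ▸ hPA
  obtain ⟨w, hw⟩ := (not_forall.mp fun h => hAuniv (eq_univ_of_forall h))
  obtain ⟨u, hu⟩ := hA
  obtain ⟨d, -, hd₁, hd₂⟩ := (hG u w).some.exists_boundary_dart (A : Set V) hu hw
  exact hG.finset_induction step (insert_nonempty d.snd A) (step A _ _ hd₁ hd₂ d.adj hPA)
termination_by #Aᶜ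
decreasing_by
  rw [compl_insert]
  exact card_erase_lt_of_mem (mem_compl.mpr hd₂)

namespace Connected

variable [Fintype V] [DecidableEq α] {G : SimpleGraph V} {m : ℕ} {S : V → Finset α}

theorem card_sup_add_one_le (hG : G.Connected) (hcard : ∀ v, #(S v) = m)
    (hadj : ∀ v w, G.Adj v w → #(S v \ S w) ≤ 1) :
    #(univ.sup S) + 1 ≤ m + Fintype.card V := by
  classical
  obtain ⟨v⟩ := hG.nonempty
  have key := hG.finset_induction (P := fun A => #(A.sup S) + 1 ≤ m + #A)
    (fun A u w hu hw huw hA => by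
      have := card_sup_insert_le (S := S) (w := w) hu
      have := hadj w u huw.symm
      rw [card_insert_of_notMem hw]
      omega)
    (singleton_nonempty v) (by simp [hcard v])
  simpa using key

theorem le_card_inf'_add [Nonempty V] (hG : G.Connected) (hcard : ∀ v, #(S v) = m)
    (hadj : ∀ v w, G.Adj v w → #(S v \ S w) ≤ 1) :
    m + 1 ≤ #(univ.inf' univ_nonempty S) + Fintype.card V := by
  classical
  obtain ⟨v⟩ := hG.nonempty
  have key := hG.finset_induction
    (P := fun A => ∀ hA : A.Nonempty, m + 1 ≤ #(A.inf' hA S) + #A)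
    (fun A u w hu hw huw hA _ => by
      have := hA ⟨u, hu⟩
      have := card_inf'_le_card_inf'_insert (S := S) (w := w) hu
      have := hadj u w huw
      rw [card_insert_of_notMem hw]
      omega)
    (singleton_nonempty v) (by simp [hcard v])
  simpa using key univ_nonempty

end Connected

namespace IsJohnsonRealization

variable [DecidableEq α] {G : SimpleGraph V} {m : ℕ} {S : V → Finset α}

theorem card_sdiff_le_one_of_adj (hS : G.IsJohnsonRealization m S) {v w : V} (h : G.Adj v w) :
    #(S v \ S w) ≤ 1 := by
  have := card_sdiff_add_card_inter (S v) (S w)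
  have := (hS.2.2 v w h.ne).1 h
  have := hS.2.1 v
  omega

theorem sdiff_of_subset (hS : G.IsJohnsonRealization m S) {C : Finset α} (hC : ∀ v, C ⊆ S v)
    (hCm : #C < m) : G.IsJohnsonRealization (m - #C) (fun v => S v \ C) := by
  refine ⟨fun v w h => hS.1 ?_, fun v => ?_, fun v w hvw => ?_⟩
  · rw [← sdiff_union_of_subset (hC v), ← sdiff_union_of_subset (hC w)]
    exact congrArg (· ∪ C) h
  · rw [card_sdiff_of_subset (hC v), hS.2.1 v]
  · have hCvw : C ⊆ S v ∩ S w := subset_inter (hC v) (hC w)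
    have hinter : (S v \ C) ∩ (S w \ C) = (S v ∩ S w) \ C := inf_sdiff.symm
    dsimp only
    rw [hinter, card_sdiff_of_subset hCvw, hS.2.2 v w hvw]
    have := card_le_card hCvw
    omega

theorem image [DecidableEq β] (hS : G.IsJohnsonRealization m S) {L : Finset α}
    (hL : ∀ v, S v ⊆ L) {f : α → β} (hf : Set.InjOn f L) :
    G.IsJohnsonRealization m (fun v => (S v).image f) := by
  have hfS : ∀ v w, Set.InjOn f (↑(S v) ∪ ↑(S w)) := fun v w =>
    hf.mono (Set.union_subset (coe_subset.2 (hL v)) (coe_subset.2 (hL w)))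
  refine ⟨fun v w h => hS.1 ?_, fun v => ?_, fun v w hvw => ?_⟩
  · have h' : f '' (S v : Set α) = f '' (S w : Set α) := by exact_mod_cast h
    exact_mod_cast (hf.image_eq_image_iff (by exact_mod_cast hL v) (by exact_mod_cast hL w)).1 h'
  · rw [card_image_of_injOn (hf.mono (by exact_mod_cast hL v)), hS.2.1 v]
  · rw [← image_inter_of_injOn _ _ (hfS v w),
      card_image_of_injOn ((hfS v w).mono
        ((coe_subset.2 inter_subset_union).trans (coe_union _ _).subset)), hS.2.2 v w hvw]

theorem exists_subset_Icc (hS : G.IsJohnsonRealization m S) {L : Finset α} (hL : ∀ v, S v ⊆ L)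
    {N : ℕ} (hLN : #L ≤ N) :
    ∃ T : V → Finset ℕ, G.IsJohnsonRealization m T ∧ ∀ v, T v ⊆ Icc 1 N := by
  obtain ⟨f, hfL, hf⟩ :=
    L.finite_toSet.exists_injOn_of_encard_le (t := ((Icc 1 N : Finset ℕ) : Set ℕ))
      (by simpa only [Set.encard_coe_eq_coe_finsetCard, Nat.card_Icc, Nat.add_sub_cancel,
        Nat.cast_le] using hLN)
  refine ⟨fun v => (S v).image f, hS.image hL hf, fun v x hx => ?_⟩
  obtain ⟨y, hy, rfl⟩ := mem_image.1 hx
  exact hfL (hL v hy)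

theorem card_inf'_univ_lt [Fintype V] [Nontrivial V] (hS : G.IsJohnsonRealization m S) :
    #(univ.inf' univ_nonempty S) < m := by
  by_contra! h
  have hcore : ∀ v, univ.inf' univ_nonempty S = S v := fun v =>
    eq_of_subset_of_card_le (inf'_le S (mem_univ v)) (by rw [hS.2.1 v]; exact h)
  obtain ⟨v, w, hvw⟩ := exists_pair_ne V
  exact hvw (hS.1 ((hcore v).symm.trans (hcore w)))

end IsJohnsonRealization

end SimpleGraph

end

/-- every connected JIS graph of order `n ≥ 2` is, for some `m ≤ n - 1`,
isomorphic to an induced subgraph of the Johnson graph `J(m, 2n - 1)`, i.e. it can be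
realized by `m`-element subsets of `{1, …, 2n - 1}`. -/
theorem connected_isJIS_realized_in_johnson {V : Type*} [Fintype V] (G : SimpleGraph V)
    (hG : IsJIS G) (hconn : G.Connected) (hn : 2 ≤ Fintype.card V) :
    ∃ m : ℕ, 0 < m ∧ m ≤ Fintype.card V - 1 ∧
      ∃ S : V → Finset ℕ, Function.Injective S ∧
        (∀ v, S v ⊆ Finset.Icc 1 (2 * Fintype.card V - 1)) ∧
        (∀ v, (S v).card = m) ∧
        ∀ v w : V, v ≠ w → (G.Adj v w ↔ (S v ∩ S w).card = m - 1) := by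
  obtain ⟨k, -, S, hS⟩ := hG
  replace hS : G.IsJohnsonRealization k S := hS
  have : Nontrivial V := Fintype.one_lt_card_iff_nontrivial.1 hn
  set C := univ.inf' univ_nonempty S
  set U := univ.sup S
  have hCS : ∀ v, C ⊆ S v := fun v => inf'_le S (mem_univ v)
  have hSU : ∀ v, S v ⊆ U := fun v => le_sup (mem_univ v)
  have hCU : C ⊆ U := (hCS (Classical.arbitrary V)).trans (hSU _)
  have hCk : #C < k := hS.card_inf'_univ_lt
  have hU : #U + 1 ≤ k + Fintype.card V :=
    hconn.card_sup_add_one_le hS.2.1 fun _ _ => hS.card_sdiff_le_one_of_adj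
  have hC : k + 1 ≤ #C + Fintype.card V :=
    hconn.le_card_inf'_add hS.2.1 fun _ _ => hS.card_sdiff_le_one_of_adj
  obtain ⟨T, hT, hTIcc⟩ := (hS.sdiff_of_subset hCS hCk).exists_subset_Icc
    (fun v => sdiff_subset_sdiff (hSU v) le_rfl) (N := 2 * Fintype.card V - 1)
    (by rw [card_sdiff_of_subset hCU]; omega)
  exact ⟨k - #C, by omega, by omega, T, hT.1, hTIcc, hT.2.1, hT.2.2⟩
end

section
/- For every integer n ≥ 5, the graph obtained by removing one edge from the complete graph K_n is not JIS. -/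
/-! If `S a` and `S b` are distinct and non-adjacent, every set adjacent to both arises from `S a`
by exchanging some `x ∈ S a \ S b` for some `y ∈ S b \ S a`, and by the triangle inequality for the
Johnson distance both differences have at most two elements. Two such exchanges give adjacent sets
exactly when they agree in precisely one of `x`, `y`, so the common neighbours of `S a` and `S b`
span a subgraph of a 4-cycle, which has no triangle. In `K_n` minus the edge `ab` with `n ≥ 5`,
however, `a` and `b` have three pairwise adjacent common neighbours. -/

open Finset

theorem pairwise_ne_or_pairwise_ne_of_xor {α β : Type*} {x₁ x₂ x₃ : α} {y₁ y₂ y₃ : β}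
    (h₁₂ : Xor (x₁ = x₂) (y₁ = y₂)) (h₁₃ : Xor (x₁ = x₃) (y₁ = y₃))
    (h₂₃ : Xor (x₂ = x₃) (y₂ = y₃)) :
    (x₁ ≠ x₂ ∧ x₁ ≠ x₃ ∧ x₂ ≠ x₃) ∨ (y₁ ≠ y₂ ∧ y₁ ≠ y₃ ∧ y₂ ≠ y₃) := by
  unfold Xor at *
  grind

variable {α : Type*} [DecidableEq α] {s t u : Finset α}

theorem Finset.mem_of_subset_insert_of_card_lt {a : α} (hst : s ⊆ insert a t) (hlt : #t < #s) :
    a ∈ s := by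
  by_contra ha
  exact (card_le_card ((subset_insert_iff_of_notMem ha).1 hst)).not_gt hlt

theorem Finset.eq_of_sdiff_eq_of_sdiff_eq (h₁ : s \ t = s \ u) (h₂ : t \ s = u \ s) : t = u := by
  rw [← sdiff_union_inter t s, ← sdiff_union_inter u s, h₂, inter_comm t, inter_comm u,
    ← sdiff_sdiff_self_left, ← sdiff_sdiff_self_left, h₁]

def JohnsonAdj (s t : Finset α) : Prop := #(s \ t) = 1 ∧ #(t \ s) = 1

namespace JohnsonAdj

theorem symm (h : JohnsonAdj s t) : JohnsonAdj t s := And.symm h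

theorem irrefl (s : Finset α) : ¬ JohnsonAdj s s := by simp [JohnsonAdj]

theorem card_eq (h : JohnsonAdj s t) : #s = #t :=
  card_sdiff_eq_card_sdiff_iff.1 (h.1.trans h.2.symm)

theorem card_sdiff_le_two (h₁ : JohnsonAdj s t) (h₂ : JohnsonAdj t u) : #(s \ u) ≤ 2 :=
  calc #(s \ u) ≤ #(s \ t ∪ t \ u) := card_le_card (sdiff_triangle s t u)
    _ ≤ #(s \ t) + #(t \ u) := card_union_le _ _
    _ = 2 := by rw [h₁.1, h₂.1]

end JohnsonAdj

theorem johnsonAdj_iff_card_inter_eq {n : ℕ} (hn : 0 < n) (hs : #s = n) (ht : #t = n) :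
    JohnsonAdj s t ↔ #(s ∩ t) = n - 1 := by
  have hcomm := card_sdiff_comm (hs.trans ht.symm)
  have := card_sdiff_add_card_inter s t
  unfold JohnsonAdj
  omega

theorem two_le_card_sdiff_of_not_johnsonAdj (hst : s ≠ t) (hcard : #s = #t)
    (h : ¬ JohnsonAdj s t) : 2 ≤ #(s \ t) := by
  have hcomm := card_sdiff_comm hcard
  by_contra! hlt
  interval_cases hsd : #(s \ t)
  · rw [card_eq_zero, sdiff_eq_empty_iff_subset] at hsd
    exact hst (eq_of_subset_of_card_le hsd hcard.ge)
  · exact h ⟨hsd, by omega⟩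

variable {A B C D : Finset α}

theorem exists_exchange_of_johnsonAdj (hA : JohnsonAdj A C) (hB : JohnsonAdj B C)
    (hAB : 2 ≤ #(A \ B)) : ∃ x ∈ A \ B, ∃ y ∈ B \ A, A \ C = {x} ∧ C \ A = {y} := by
  obtain ⟨x, hx⟩ := card_eq_one.1 hA.1
  obtain ⟨y, hy⟩ := card_eq_one.1 hA.2
  have hBA : 2 ≤ #(B \ A) := card_sdiff_comm (hA.card_eq.trans hB.card_eq.symm) ▸ hAB
  refine ⟨x, mem_of_subset_insert_of_card_lt ?_ (by rw [hB.2]; omega), y,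
    mem_of_subset_insert_of_card_lt ?_ (by rw [hB.1]; omega), hx, hy⟩
  · exact (sdiff_triangle A C B).trans_eq (by rw [sup_eq_union, hx, ← insert_eq])
  · exact (sdiff_triangle B C A).trans_eq (by rw [sup_eq_union, hy, union_comm, ← insert_eq])

theorem xor_eq_of_johnsonAdj {x x' y y' : α} (hx : A \ C = {x}) (hy : C \ A = {y})
    (hx' : A \ D = {x'}) (hy' : D \ A = {y'}) (h : JohnsonAdj C D) : Xor (x = x') (y = y') := by
  rw [xor_iff_or_and_not_and]
  constructor
  · by_contra! hne
    simp only [Finset.ext_iff, mem_sdiff, mem_singleton] at hx hy hx' hy'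
    have hsub : {x', y} ⊆ C \ D := by
      intro z hz
      simp only [mem_insert, mem_singleton] at hz
      grind
    have := card_le_card hsub
    rw [card_pair (by grind), h.1] at this
    omega
  · rintro ⟨rfl, rfl⟩
    have hCD : C = D := eq_of_sdiff_eq_of_sdiff_eq (hx.trans hx'.symm) (hy.trans hy'.symm)
    exact JohnsonAdj.irrefl C (hCD ▸ h)

theorem not_johnsonAdj_of_commonNeighbors {C₁ C₂ C₃ : Finset α} (hAB : 2 ≤ #(A \ B))
    (h₁ : JohnsonAdj A C₁ ∧ JohnsonAdj B C₁) (h₂ : JohnsonAdj A C₂ ∧ JohnsonAdj B C₂)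
    (h₃ : JohnsonAdj A C₃ ∧ JohnsonAdj B C₃) (h₁₂ : JohnsonAdj C₁ C₂) (h₁₃ : JohnsonAdj C₁ C₃) :
    ¬ JohnsonAdj C₂ C₃ := by
  intro h₂₃
  obtain ⟨x₁, hx₁, y₁, hy₁, hA₁, hB₁⟩ := exists_exchange_of_johnsonAdj h₁.1 h₁.2 hAB
  obtain ⟨x₂, hx₂, y₂, hy₂, hA₂, hB₂⟩ := exists_exchange_of_johnsonAdj h₂.1 h₂.2 hAB
  obtain ⟨x₃, hx₃, y₃, hy₃, hA₃, hB₃⟩ := exists_exchange_of_johnsonAdj h₃.1 h₃.2 hAB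
  rcases pairwise_ne_or_pairwise_ne_of_xor (xor_eq_of_johnsonAdj hA₁ hB₁ hA₂ hB₂ h₁₂)
      (xor_eq_of_johnsonAdj hA₁ hB₁ hA₃ hB₃ h₁₃) (xor_eq_of_johnsonAdj hA₂ hB₂ hA₃ hB₃ h₂₃)
    with hx | hy
  · exact (h₁.1.card_sdiff_le_two h₁.2.symm).not_gt
      (two_lt_card.2 ⟨x₁, hx₁, x₂, hx₂, x₃, hx₃, hx⟩)
  · exact (h₁.2.card_sdiff_le_two h₁.1.symm).not_gt
      (two_lt_card.2 ⟨y₁, hy₁, y₂, hy₂, y₃, hy₃, hy⟩)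

/-- for `n ≥ 5`, the complete graph `K_n` minus one edge is not JIS. -/
theorem complete_minus_edge_not_isJIS (n : ℕ) (hn : 5 ≤ n) (a b : Fin n) (hab : a ≠ b) :
    ¬ IsJIS ((⊤ : SimpleGraph (Fin n)).deleteEdges {s(a, b)}) := by
  rintro ⟨m, hm, S, hinj, hcard, hadj⟩
  have hJ : ∀ v w, v ≠ w →
      (((⊤ : SimpleGraph (Fin n)).deleteEdges {s(a, b)}).Adj v w ↔ JohnsonAdj (S v) (S w)) :=
    fun v w hvw => (hadj v w hvw).trans (johnsonAdj_iff_card_inter_eq hm (hcard v) (hcard w)).symm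
  have hAB : 2 ≤ #(S a \ S b) :=
    two_le_card_sdiff_of_not_johnsonAdj (hinj.ne hab) ((hcard a).trans (hcard b).symm)
      fun h => by simpa using (hJ a b hab).2 h
  have hothers : 2 < #({a, b}ᶜ : Finset (Fin n)) := by
    rw [card_compl, card_pair hab, Fintype.card_fin]; omega
  obtain ⟨c, hc, d, hd, e, he, hcd, hce, hde⟩ := two_lt_card.1 hothers
  have hother_adj : ∀ v ∈ ({a, b}ᶜ : Finset (Fin n)), ∀ w, v ≠ w → JohnsonAdj (S v) (S w) := by
    intro v hv w hvw
    simp only [mem_compl, mem_insert, mem_singleton, not_or] at hv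
    exact (hJ v w hvw).1 (by simp [hvw, hv.1, hv.2])
  have hcommon : ∀ v ∈ ({a, b}ᶜ : Finset (Fin n)),
      JohnsonAdj (S a) (S v) ∧ JohnsonAdj (S b) (S v) :=
    fun v hv => ⟨(hother_adj v hv a (by grind)).symm, (hother_adj v hv b (by grind)).symm⟩
  exact not_johnsonAdj_of_commonNeighbors hAB (hcommon c hc) (hcommon d hd) (hcommon e he)
    (hother_adj c hc d hcd) (hother_adj c hc e hce) (hother_adj d hd e hde)
end

section
/- Every JIS graph is an edge move distance graph: if G is a finite JIS graph, then there exists a family (Q_v), indexed by the vertices v of G, of finite simple graphs on a common finite vertex set, all with the same number of edges and pairwise non-isomorphic, such that for all distinct vertices v and w of G: v is adjacent to w in G if and only if there exist an edge e of Q_v and a non-edge f of Q_v such that the graph obtained from Q_v by deleting e and adding f is isomorphic to Q_w (i.e., d_m(Q_v, Q_w) = 1). -/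
open Finset

lemma Finset.card_inter_eq_card_sub_one_iff {α : Type*} [DecidableEq α] {s t : Finset α}
    (hs : 0 < #s) : #(s ∩ t) = #s - 1 ↔ #(s \ t) = 1 := by
  have := card_sdiff_add_card_inter s t
  omega

namespace SimpleGraph

variable {V : Type*}

def edgeMove (G : SimpleGraph V) (e f : Sym2 V) : SimpleGraph V :=
  G.deleteEdges {e} ⊔ fromEdgeSet {f}

@[simp] lemma edgeMove_adj {G : SimpleGraph V} {e f : Sym2 V} {u z : V} :
    (G.edgeMove e f).Adj u z ↔ (G.Adj u z ∧ s(u, z) ≠ e) ∨ (s(u, z) = f ∧ u ≠ z) := by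
  simp [edgeMove]

instance [DecidableEq V] (G : SimpleGraph V) [DecidableRel G.Adj] (e f : Sym2 V) :
    DecidableRel (G.edgeMove e f).Adj :=
  fun _ _ => decidable_of_iff' _ edgeMove_adj

variable [Fintype V] [DecidableEq V] (G : SimpleGraph V) [DecidableRel G.Adj]

lemma degree_edgeMove_le (e : Sym2 V) (p q u : V) :
    (G.edgeMove e s(p, q)).degree u ≤ G.degree u + 1 := by
  have : (G.edgeMove e s(p, q)).neighborFinset u ⊆
      insert (if u = p then q else p) (G.neighborFinset u) := by
    intro z
    simp only [mem_neighborFinset, edgeMove_adj, mem_insert, Sym2.eq_iff]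
    split_ifs <;> grind
  simpa using (card_le_card this).trans (card_insert_le _ _)

lemma degree_le_degree_edgeMove_add_one (x y : V) (f : Sym2 V) (u : V) :
    G.degree u ≤ (G.edgeMove s(x, y) f).degree u + 1 := by
  have : G.neighborFinset u ⊆
      insert (if u = x then y else x) ((G.edgeMove s(x, y) f).neighborFinset u) := by
    intro z
    simp only [mem_neighborFinset, edgeMove_adj, mem_insert]
    split_ifs <;> grind [G.ne_of_adj]
  simpa using (card_le_card this).trans (card_insert_le _ _)

lemma degree_le_degree_edgeMove {e : Sym2 V} (f : Sym2 V) {u : V} (hu : u ∉ e) :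
    G.degree u ≤ (G.edgeMove e f).degree u := by
  refine card_le_card fun z hz => ?_
  rw [mem_neighborFinset] at hz ⊢
  exact edgeMove_adj.2 (Or.inl ⟨hz, fun h => hu (h ▸ Sym2.mem_mk_left u z)⟩)

variable {M : ℕ}

/-- Star `j` has centre `(j, 0)` and leaves `(j, t)` for `1 ≤ t ≤ s j`; all other vertices are
isolated. -/
def starForest (K : ℕ) (s : Fin M → ℕ) : SimpleGraph (Fin M × Fin (K + 1)) where
  Adj x y := x.1 = y.1 ∧
    (x.2 = 0 ∧ y.2 ≠ 0 ∧ (y.2 : ℕ) ≤ s x.1 ∨ y.2 = 0 ∧ x.2 ≠ 0 ∧ (x.2 : ℕ) ≤ s x.1)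

variable {K : ℕ} (s : Fin M → ℕ)

lemma starForest_adj {x y : Fin M × Fin (K + 1)} : (starForest K s).Adj x y ↔ x.1 = y.1 ∧
    (x.2 = 0 ∧ y.2 ≠ 0 ∧ (y.2 : ℕ) ≤ s x.1 ∨ y.2 = 0 ∧ x.2 ≠ 0 ∧ (x.2 : ℕ) ≤ s x.1) :=
  .rfl

instance : DecidableRel (starForest K s).Adj :=
  fun _ _ => decidable_of_iff' _ (starForest_adj s)

lemma neighborFinset_starForest_zero (j : Fin M) :
    (starForest K s).neighborFinset (j, 0) =
      (univ.filter fun i : Fin K => (i : ℕ) < s j).image fun i => (j, i.succ) := by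
  ext ⟨j', t⟩
  cases t using Fin.cases <;> simp [starForest_adj, Fin.succ_ne_zero, eq_comm, and_comm]

lemma neighborFinset_starForest_succ (j : Fin M) (i : Fin K) :
    (starForest K s).neighborFinset (j, i.succ) = if (i : ℕ) < s j then {(j, 0)} else ∅ := by
  ext ⟨j', t⟩
  cases t using Fin.cases <;> split_ifs with h <;>
    simp [starForest_adj, Fin.succ_ne_zero, eq_comm, h]

lemma degree_starForest_zero (j : Fin M) : (starForest K s).degree (j, 0) = min K (s j) := by
  rw [← card_neighborFinset_eq_degree, neighborFinset_starForest_zero,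
    card_image_of_injective _ fun _ _ h => Fin.succ_injective _ (Prod.ext_iff.1 h).2,
    Fin.card_filter_val_lt]

lemma degree_starForest_succ (j : Fin M) (i : Fin K) :
    (starForest K s).degree (j, i.succ) = if (i : ℕ) < s j then 1 else 0 := by
  rw [← card_neighborFinset_eq_degree, neighborFinset_starForest_succ]
  split_ifs <;> rfl

lemma card_edgeFinset_starForest (hs : ∀ j, s j ≤ K) :
    #(starForest K s).edgeFinset = ∑ j, s j := by
  have hsum : ∑ u, (starForest K s).degree u = 2 * ∑ j, s j := by
    simp only [Fintype.sum_prod_type, Fin.sum_univ_succ, degree_starForest_zero,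
      degree_starForest_succ, sum_boole, Fin.card_filter_val_lt, Nat.cast_id, mul_sum]
    exact sum_congr rfl fun j _ => by have := hs j; omega
  have := (starForest K s).sum_degrees_eq_twice_card_edges
  omega

lemma edgeMove_starForest {s' : Fin M → ℕ} {a b : Fin M} (hab : a ≠ b) {la lb : Fin (K + 1)}
    (hla : (la : ℕ) = s a) (hlb : (lb : ℕ) = s' b) (ha : s' a + 1 = s a) (hb : s b + 1 = s' b)
    (hs : ∀ j, j ≠ a → j ≠ b → s' j = s j) :
    (starForest K s).edgeMove s((a, 0), (a, la)) s((b, 0), (b, lb)) = starForest K s' := by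
  ext ⟨j, t⟩ ⟨j', t'⟩
  simp only [edgeMove_adj, starForest_adj, ne_eq, Sym2.eq_iff, Prod.ext_iff, Fin.ext_iff,
    Fin.val_zero]
  grind

end SimpleGraph

open SimpleGraph

variable {M : ℕ}

def starSizes (A : Finset ℕ) (j : Fin M) : ℕ := 3 * j + 3 + if (j : ℕ) ∈ A then 1 else 0

abbrev jisForest (M : ℕ) (A : Finset ℕ) : SimpleGraph (Fin M × Fin (3 * M + 1 + 1)) :=
  starForest (3 * M + 1) (starSizes A)

variable {A B : Finset ℕ}

lemma starSizes_bounds (A : Finset ℕ) (j : Fin M) :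
    3 * j + 3 ≤ starSizes A j ∧ starSizes A j ≤ 3 * j + 4 := by
  unfold starSizes; split_ifs <;> omega

lemma mem_iff_mem_of_starSizes_eq {j : Fin M} (h : starSizes A j = starSizes B j) :
    (j : ℕ) ∈ A ↔ (j : ℕ) ∈ B := by
  unfold starSizes at h; split_ifs at h <;> simp_all

lemma degree_jisForest_zero (A : Finset ℕ) (j : Fin M) :
    (jisForest M A).degree (j, 0) = starSizes A j := by
  have := (starSizes_bounds A j).2
  rw [degree_starForest_zero, min_eq_right (by omega)]

lemma degree_jisForest_succ_le (A : Finset ℕ) (j : Fin M) (i : Fin (3 * M + 1)) :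
    (jisForest M A).degree (j, i.succ) ≤ 1 := by
  rw [degree_starForest_succ]; split_ifs <;> omega

lemma ncard_edgeSet_jisForest (hA : A ⊆ range M) :
    (jisForest M A).edgeSet.ncard = ∑ j : Fin M, (3 * (j : ℕ) + 3) + #A := by
  rw [← coe_edgeFinset, Set.ncard_coe_finset,
    card_edgeFinset_starForest _ fun j => by have := (starSizes_bounds A j).2; omega]
  simp only [starSizes, sum_add_distrib]
  rw [Fin.sum_univ_eq_sum_range (fun j => if j ∈ A then 1 else 0), sum_boole,
    filter_mem_eq_inter, inter_eq_right.2 hA, Nat.cast_id]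

/-- The degree bands `[3j + 2, 3j + 5]` of the centres are pairwise disjoint and lie above the
leaf degrees, so an isomorphism must send each centre to the centre of the same star. -/
lemma degree_zero_eq_of_iso {H : SimpleGraph (Fin M × Fin (3 * M + 1 + 1))} [DecidableRel H.Adj]
    (hleaf : ∀ j (i : Fin (3 * M + 1)), H.degree (j, i.succ) ≤ 2)
    (hcenter : ∀ j : Fin M, 3 * j + 2 ≤ H.degree (j, 0) ∧ H.degree (j, 0) ≤ 3 * j + 5)
    (φ : H ≃g jisForest M B) (j : Fin M) : H.degree (j, 0) = starSizes B j := by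
  have hdeg : H.degree (φ.symm (j, 0)) = starSizes B j := by
    rw [← degree_jisForest_zero, ← φ.degree_eq, φ.apply_symm_apply]
  have hB := starSizes_bounds B j
  generalize φ.symm (j, 0) = u at hdeg
  obtain ⟨i, t⟩ := u
  cases t using Fin.cases with
  | zero =>
    obtain rfl : i = j := by have := hcenter i; ext; omega
    exact hdeg
  | succ t => have := hleaf i t; omega

lemma eq_of_jisForest_iso (hA : A ⊆ range M) (hB : B ⊆ range M)
    (φ : jisForest M A ≃g jisForest M B) : A = B := by
  have hsizes (j : Fin M) : starSizes A j = starSizes B j := by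
    rw [← degree_jisForest_zero A j]
    refine degree_zero_eq_of_iso (fun j i => (degree_jisForest_succ_le A j i).trans one_le_two)
      (fun j => ?_) φ j
    have := starSizes_bounds A j
    rw [degree_jisForest_zero]
    omega
  ext m
  by_cases hm : m < M
  · exact mem_iff_mem_of_starSizes_eq (hsizes ⟨m, hm⟩)
  · exact iff_of_false (fun h => hm (mem_range.1 (hA h))) (fun h => hm (mem_range.1 (hB h)))

lemma degree_edgeMove_zero_eq_of_iso {x y p q : Fin M × Fin (3 * M + 1 + 1)}
    (φ : (jisForest M A).edgeMove s(x, y) s(p, q) ≃g jisForest M B) (j : Fin M) :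
    ((jisForest M A).edgeMove s(x, y) s(p, q)).degree (j, 0) = starSizes B j := by
  refine degree_zero_eq_of_iso (fun j i => ?_) (fun j => ?_) φ j
  · have := degree_edgeMove_le (jisForest M A) s(x, y) p q (j, i.succ)
    have := degree_jisForest_succ_le A j i
    omega
  · have := degree_edgeMove_le (jisForest M A) s(x, y) p q (j, 0)
    have := degree_le_degree_edgeMove_add_one (jisForest M A) x y s(p, q) (j, 0)
    have := starSizes_bounds A j
    rw [degree_jisForest_zero] at *
    omega

lemma card_sdiff_le_one_of_edgeMove_iso (hA : A ⊆ range M) {e : Sym2 (Fin M × Fin (3 * M + 1 + 1))}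
    (he : e ∈ (jisForest M A).edgeSet) (f : Sym2 (Fin M × Fin (3 * M + 1 + 1)))
    (φ : (jisForest M A).edgeMove e f ≃g jisForest M B) : #(A \ B) ≤ 1 := by
  induction e using Sym2.ind with | _ x y => ?_
  induction f using Sym2.ind with | _ p q => ?_
  have hsub : A \ B ⊆ {(x.1 : ℕ)} := by
    intro m hm
    obtain ⟨hmA, hmB⟩ := mem_sdiff.1 hm
    set j : Fin M := ⟨m, mem_range.1 (hA hmA)⟩
    have hlt : ((jisForest M A).edgeMove s(x, y) s(p, q)).degree (j, 0) <
        (jisForest M A).degree (j, 0) := by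
      rw [degree_edgeMove_zero_eq_of_iso φ, degree_jisForest_zero]
      simp [starSizes, j, hmA, hmB]
    have hmem : (j, 0) ∈ s(x, y) := by
      by_contra h
      exact hlt.not_ge (degree_le_degree_edgeMove _ _ h)
    have hrow : x.1 = y.1 := ((starForest_adj _).1 he).1
    rcases Sym2.mem_iff.1 hmem with h | h <;> simp [hrow, ← h, j]
  exact (card_le_card hsub).trans (card_singleton _).le

lemma exists_edgeMove_eq (hA : A ⊆ range M) (hB : B ⊆ range M) (hcard : #A = #B)
    (h : #(A \ B) = 1) :
    ∃ e f, e ∈ (jisForest M A).edgeSet ∧ f ∉ (jisForest M A).edgeSet ∧ ¬ f.IsDiag ∧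
      (jisForest M A).edgeMove e f = jisForest M B := by
  obtain ⟨a, ha⟩ := card_eq_one.1 h
  obtain ⟨b, hb⟩ := card_eq_one.1 (card_sdiff_comm hcard ▸ h)
  obtain ⟨haA, haB⟩ := mem_sdiff.1 (ha ▸ mem_singleton_self a)
  obtain ⟨hbB, hbA⟩ := mem_sdiff.1 (hb ▸ mem_singleton_self b)
  have haM := mem_range.1 (hA haA)
  have hbM := mem_range.1 (hB hbB)
  let a' : Fin M := ⟨a, haM⟩
  let b' : Fin M := ⟨b, hbM⟩
  let la : Fin (3 * M + 1 + 1) := ⟨3 * a + 4, by omega⟩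
  let lb : Fin (3 * M + 1 + 1) := ⟨3 * b + 4, by omega⟩
  have hab : a' ≠ b' := fun h => hbA (by rwa [← Fin.mk.inj h])
  have hsizes (j : Fin M) (hja : j ≠ a') (hjb : j ≠ b') : starSizes B j = starSizes A j := by
    have hjA : (j : ℕ) ∉ A \ B := by rw [ha, mem_singleton]; exact fun h => hja (Fin.ext h)
    have hjB : (j : ℕ) ∉ B \ A := by rw [hb, mem_singleton]; exact fun h => hjb (Fin.ext h)
    simp only [starSizes, mem_sdiff, not_and_not_right] at hjA hjB ⊢
    grind
  refine ⟨s((a', 0), (a', la)), s((b', 0), (b', lb)), ?_, ?_, ?_,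
    edgeMove_starForest _ hab ?_ ?_ ?_ ?_ hsizes⟩ <;>
    simp [starForest_adj, starSizes, a', b', la, lb, haA, haB, hbA, hbB, Fin.ext_iff]

/-- every JIS graph is an edge move distance graph.  If `G` is a finite JIS
graph, then there is a family `Q v` (indexed by the vertices of `G`) of finite simple
graphs on a common finite vertex set, all with the same number of edges and pairwise
non-isomorphic, such that for all distinct vertices `v`, `w`: `v` is adjacent to `w` in
`G` if and only if some single edge move (deleting one edge `e` of `Q v` and adding one
new edge `f` between a currently non-adjacent pair of vertices) transforms `Q v` into a
graph isomorphic to `Q w`, i.e. `d_m(Q v, Q w) = 1`. -/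
theorem isJIS_is_edge_move_distance_graph {V : Type*} [Fintype V] (G : SimpleGraph V)
    (hG : IsJIS G) :
    ∃ (W : Type) (_ : Fintype W) (Q : V → SimpleGraph W),
      (∀ v w : V, (Q v).edgeSet.ncard = (Q w).edgeSet.ncard) ∧
      (∀ v w : V, v ≠ w → ¬ Nonempty (Q v ≃g Q w)) ∧
      (∀ v w : V, v ≠ w → (G.Adj v w ↔
        ∃ e f : Sym2 W, e ∈ (Q v).edgeSet ∧ f ∉ (Q v).edgeSet ∧ ¬ f.IsDiag ∧
          Nonempty (((Q v).deleteEdges {e} ⊔ SimpleGraph.fromEdgeSet {f}) ≃g Q w))) := by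
  classical
  obtain ⟨n, hn, S, hSinj, hScard, hSadj⟩ := hG
  obtain ⟨M, hM⟩ := (univ.biUnion S).exists_nat_subset_range
  have hS (v : V) : S v ⊆ range M := (subset_biUnion_of_mem S (mem_univ v)).trans hM
  refine ⟨Fin M × Fin (3 * M + 1 + 1), inferInstance, fun v => jisForest M (S v), fun v w => ?_,
    fun v w hvw ⟨φ⟩ => hvw (hSinj (eq_of_jisForest_iso (hS v) (hS w) φ)), fun v w hvw => ?_⟩
  · rw [ncard_edgeSet_jisForest (hS v), ncard_edgeSet_jisForest (hS w), hScard, hScard]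
  have hcard : #(S v) = #(S w) := by rw [hScard, hScard]
  rw [hSadj v w hvw, ← hScard v, card_inter_eq_card_sub_one_iff (hScard v ▸ hn)]
  constructor
  · intro h
    obtain ⟨e, f, he, hf, hfd, hmove⟩ := exists_edgeMove_eq (hS v) (hS w) hcard h
    refine ⟨e, f, he, hf, hfd, ⟨?_⟩⟩
    change (jisForest M (S v)).edgeMove e f ≃g _
    exact hmove ▸ Iso.refl
  · rintro ⟨e, f, he, -, -, ⟨φ⟩⟩
    have hpos : 0 < #(S v \ S w) := card_pos.2 <| sdiff_nonempty.2 fun h =>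
      hSinj.ne hvw (eq_of_subset_of_card_le h hcard.ge)
    have := card_sdiff_le_one_of_edgeMove_iso (hS v) he f φ
    omega
end
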